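/- arXiv:2105.13883 — 8 statements merged into one kernel-verified Lean document; each statement's English description precedes it below -/
import Mathlib

section
/- Let P_1,…,P_s ∈ ℤ[x_1,…,x_r] (s ≥ 2, r ≥ 1) be nonzero polynomials with no common zero in ℂ^r. Then the set 𝒟 = {d_n : n ∈ ℤ^r} is a finite set of positive integers stable under gcd and lcm; in particular its smallest element divides every element of 𝒟 and its largest element is a multiple of every element of 𝒟. -/
/-!
By the Nullstellensatz over `ℚ`, after clearing denominators, some integer `N ≠ 0` lies in the
ideal of `ℤ[x]` generated by the `P i`; hence every `d_n` is a positive divisor of `N`.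
Modulo any `u`, `gcd (d_n, u)` depends only on `n mod u`, so for a splitting `N = u v` into
coprime factors the Chinese remainder theorem gives, for all `n, m`, a point `x` with
`d_x = gcd (d_n, u) * gcd (d_m, v)`. Assigning each prime of `N` to `u` or `v` according to
which of `d_n, d_m` has the smaller (resp. larger) exponent makes this `gcd (d_n, d_m)`
(resp. `lcm`). In a finite set of positive integers closed under `gcd` the least element
divides all others, and dually for `lcm`.
-/

open MvPolynomial

theorem Nat.exists_coprime_mul_eq_and_gcd_mul_gcd_eq {a b c D : ℕ} (hD : D ≠ 0) (ha : a ∣ D)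
    (hb : b ∣ D) (hc : c ≠ 0)
    (hcab : ∀ p, c.factorization p = a.factorization p ∨ c.factorization p = b.factorization p) :
    ∃ u v, u.Coprime v ∧ u * v = D ∧ a.gcd u * b.gcd v = c := by
  classical
  have ha0 : a ≠ 0 := ne_zero_of_dvd_ne_zero hD ha
  have hb0 : b ≠ 0 := ne_zero_of_dvd_ne_zero hD hb
  have haD := (Nat.factorization_le_iff_dvd ha0 hD).2 ha
  have hbD := (Nat.factorization_le_iff_dvd hb0 hD).2 hb
  have prime_of_mem (T : ℕ → Prop) [DecidablePred T] :
      ∀ p ∈ (D.factorization.filter T).support, p.Prime := fun p hp => by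
    rw [Finsupp.support_filter, Nat.support_factorization] at hp
    exact Nat.prime_of_mem_primeFactors (Finset.mem_of_mem_filter p hp)
  let S : ℕ → Prop := fun p => c.factorization p = a.factorization p
  set u := (D.factorization.filter S).prod (· ^ ·)
  set v := (D.factorization.filter (¬ S ·)).prod (· ^ ·)
  have hu0 : u ≠ 0 :=
    Finsupp.prod_ne_zero_iff.2 fun p hp => pow_ne_zero _ (prime_of_mem _ p hp).ne_zero
  have hv0 : v ≠ 0 :=
    Finsupp.prod_ne_zero_iff.2 fun p hp => pow_ne_zero _ (prime_of_mem _ p hp).ne_zero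
  have hu p : u.factorization p = if S p then D.factorization p else 0 := by
    rw [Nat.prod_pow_factorization_eq_self (prime_of_mem _), Finsupp.filter_apply]
  have hv p : v.factorization p = if S p then 0 else D.factorization p := by
    rw [Nat.prod_pow_factorization_eq_self (prime_of_mem _), Finsupp.filter_apply]
    exact ite_not _ _ _
  refine ⟨u, v, ?_, ?_, ?_⟩
  · refine Nat.eq_of_factorization_eq (Nat.gcd_ne_zero_left hu0) one_ne_zero fun p => ?_
    rw [Nat.factorization_gcd hu0 hv0, Finsupp.inf_apply, hu, hv, Nat.factorization_one]
    split_ifs <;> simp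
  · refine Nat.eq_of_factorization_eq (mul_ne_zero hu0 hv0) hD fun p => ?_
    rw [Nat.factorization_mul hu0 hv0, Finsupp.add_apply, hu, hv]
    split_ifs <;> simp
  · have hau := Nat.gcd_ne_zero_left (n := u) ha0
    have hbv := Nat.gcd_ne_zero_left (n := v) hb0
    refine Nat.eq_of_factorization_eq (mul_ne_zero hau hbv) hc fun p => ?_
    rw [Nat.factorization_mul hau hbv, Finsupp.add_apply, Nat.factorization_gcd ha0 hu0,
      Nat.factorization_gcd hb0 hv0, Finsupp.inf_apply, Finsupp.inf_apply, hu, hv]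
    have := hcab p; have := haD p; have := hbD p
    split_ifs with h <;> simp only [S] at h <;> omega

theorem Nat.exists_coprime_mul_eq_and_gcd_mul_gcd_eq_gcd {a b D : ℕ} (hD : D ≠ 0) (ha : a ∣ D)
    (hb : b ∣ D) : ∃ u v, u.Coprime v ∧ u * v = D ∧ a.gcd u * b.gcd v = a.gcd b := by
  have ha0 : a ≠ 0 := ne_zero_of_dvd_ne_zero hD ha
  have hb0 : b ≠ 0 := ne_zero_of_dvd_ne_zero hD hb
  refine exists_coprime_mul_eq_and_gcd_mul_gcd_eq hD ha hb (Nat.gcd_ne_zero_left ha0) fun p => ?_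
  rw [Nat.factorization_gcd ha0 hb0, Finsupp.inf_apply]
  exact min_choice _ _

theorem Nat.exists_coprime_mul_eq_and_gcd_mul_gcd_eq_lcm {a b D : ℕ} (hD : D ≠ 0) (ha : a ∣ D)
    (hb : b ∣ D) : ∃ u v, u.Coprime v ∧ u * v = D ∧ a.gcd u * b.gcd v = a.lcm b := by
  have ha0 : a ≠ 0 := ne_zero_of_dvd_ne_zero hD ha
  have hb0 : b ≠ 0 := ne_zero_of_dvd_ne_zero hD hb
  refine exists_coprime_mul_eq_and_gcd_mul_gcd_eq hD ha hb (Nat.lcm_ne_zero ha0 hb0) fun p => ?_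
  rw [Nat.factorization_lcm ha0 hb0, Finsupp.sup_apply]
  exact max_choice _ _

theorem MvPolynomial.eq_top_of_zeroLocus_eq_empty {k K σ : Type*} [Field k] [Field K]
    [Algebra k K] [IsAlgClosed K] [Finite σ] {I : Ideal (MvPolynomial σ k)}
    (h : zeroLocus K I = ∅) : I = ⊤ := by
  rw [← Ideal.radical_eq_top, ← vanishingIdeal_zeroLocus_eq_radical (K := K), h,
    vanishingIdeal_empty]

section Localization

attribute [local instance] MvPolynomial.algebraMvPolynomial

theorem MvPolynomial.exists_C_mem_of_map_eq_top {σ R S : Type*} [CommRing R] (M : Submonoid R)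
    [CommRing S] [Algebra R S] [IsLocalization M S] {I : Ideal (MvPolynomial σ R)}
    (h : I.map (map (algebraMap R S)) = ⊤) : ∃ m ∈ M, C m ∈ I := by
  rw [← algebraMap_def, ← not_ne_iff,
    IsLocalization.map_algebraMap_ne_top_iff_disjoint (M.map C), Set.not_disjoint_iff] at h
  obtain ⟨_, ⟨m, hm, rfl⟩, hmI⟩ := h
  exact ⟨m, hm, hmI⟩

end Localization

theorem MvPolynomial.exists_C_mem_span_of_not_exists_common_zero {ι σ : Type*} [Finite σ]
    (P : ι → MvPolynomial σ ℤ)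
    (h : ¬ ∃ z : σ → ℂ, ∀ i, eval z ((P i).map (Int.castRingHom ℂ)) = 0) :
    ∃ N : ℤ, N ≠ 0 ∧ C N ∈ Ideal.span (Set.range P) := by
  have htop : (Ideal.span (Set.range P)).map (map (algebraMap ℤ ℚ)) = ⊤ := by
    refine eq_top_of_zeroLocus_eq_empty (K := ℂ) (Set.eq_empty_of_forall_notMem fun z hz => h ?_)
    refine ⟨z, fun i => ?_⟩
    rw [Ideal.map_span, zeroLocus_span] at hz
    rw [eval_map, ← algebraMap_int_eq, ← aeval_def, ← aeval_map_algebraMap ℚ]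
    exact hz _ ⟨P i, ⟨i, rfl⟩, rfl⟩
  obtain ⟨N, hN, hNmem⟩ := exists_C_mem_of_map_eq_top (nonZeroDivisors ℤ) htop
  exact ⟨N, nonZeroDivisors.ne_zero hN, hNmem⟩

theorem MvPolynomial.dvd_eval_sub_eval {R σ : Type*} [CommRing R] {M : R} (p : MvPolynomial σ R)
    {x y : σ → R} (h : ∀ j, M ∣ x j - y j) : M ∣ eval x p - eval y p := by
  simp_rw [← Ideal.mem_span_singleton, ← Ideal.Quotient.eq] at h ⊢
  rw [eval₂_comp, eval₂_comp]
  congr 1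
  funext j
  exact h j

theorem IsCoprime.exists_dvd_sub_and_dvd_sub {R : Type*} [CommRing R] {u v : R}
    (h : IsCoprime u v) (a b : R) : ∃ t, u ∣ t - a ∧ v ∣ t - b := by
  obtain ⟨c, d, hcd⟩ := h
  exact ⟨a * d * v + b * c * u, ⟨c * (b - a), by linear_combination a * hcd⟩,
    ⟨d * (a - b), by linear_combination b * hcd⟩⟩

theorem gcd_finset_gcd_eq_of_dvd_sub {α ι : Type*} [CommRing α] [NormalizedGCDMonoid α]
    {s : Finset ι} {f g : ι → α} {M : α} (h : ∀ i ∈ s, M ∣ f i - g i) :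
    gcd (s.gcd f) M = gcd (s.gcd g) M := by
  have key (φ ψ : ι → α) (h : ∀ i ∈ s, M ∣ φ i - ψ i) : gcd (s.gcd φ) M ∣ gcd (s.gcd ψ) M := by
    refine dvd_gcd (Finset.dvd_gcd fun i hi => ?_) (gcd_dvd_right _ _)
    have : gcd (s.gcd φ) M ∣ φ i - (φ i - ψ i) :=
      dvd_sub ((gcd_dvd_left _ _).trans (Finset.gcd_dvd hi)) ((gcd_dvd_right _ _).trans (h i hi))
    rwa [sub_sub_cancel] at this
  exact dvd_antisymm_of_normalize_eq (normalize_gcd _ _) (normalize_gcd _ _) (key f g h)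
    (key g f fun i hi => dvd_sub_comm.1 (h i hi))

section ExtremalElements

variable {ι : Type*} [Nonempty ι] {f : ι → ℤ}

theorem exists_isLeast_range_dvd (hfin : (Set.range f).Finite) (hpos : ∀ n, 0 < f n)
    (hgcd : ∀ n m, ∃ x, gcd (f n) (f m) = f x) :
    ∃ a, IsLeast (Set.range f) a ∧ ∀ e ∈ Set.range f, a ∣ e := by
  obtain ⟨_, ⟨n, rfl⟩, hmin⟩ := Set.exists_min_image _ id hfin (Set.range_nonempty f)
  refine ⟨f n, ⟨⟨n, rfl⟩, fun e he => hmin e he⟩, ?_⟩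
  rintro _ ⟨m, rfl⟩
  obtain ⟨x, hx⟩ := hgcd n m
  have : gcd (f n) (f m) = f n :=
    le_antisymm (Int.le_of_dvd (hpos n) (gcd_dvd_left _ _)) (hx ▸ hmin _ ⟨x, rfl⟩)
  exact this ▸ gcd_dvd_right _ _

theorem exists_isGreatest_range_dvd (hfin : (Set.range f).Finite) (hpos : ∀ n, 0 < f n)
    (hlcm : ∀ n m, ∃ x, lcm (f n) (f m) = f x) :
    ∃ b, IsGreatest (Set.range f) b ∧ ∀ e ∈ Set.range f, e ∣ b := by
  obtain ⟨_, ⟨n, rfl⟩, hmax⟩ := Set.exists_max_image _ id hfin (Set.range_nonempty f)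
  refine ⟨f n, ⟨⟨n, rfl⟩, fun e he => hmax e he⟩, ?_⟩
  rintro _ ⟨m, rfl⟩
  obtain ⟨x, hx⟩ := hlcm n m
  have : lcm (f n) (f m) = f n :=
    le_antisymm (hx ▸ hmax _ ⟨x, rfl⟩) (Int.le_of_dvd (hx ▸ hpos x) (dvd_lcm_left _ _))
  exact this ▸ dvd_lcm_right _ _

end ExtremalElements

namespace MvPolynomial

variable {ι σ : Type*} [Fintype ι] (P : ι → MvPolynomial σ ℤ)

noncomputable def valuesGcd (n : σ → ℤ) : ℤ :=
  Finset.univ.gcd fun i => eval n (P i)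

theorem valuesGcd_nonneg (n : σ → ℤ) : 0 ≤ valuesGcd P n :=
  Int.nonneg_of_normalize_eq_self Finset.normalize_gcd

theorem valuesGcd_pos (h : ¬ ∃ z : σ → ℂ, ∀ i, eval z ((P i).map (Int.castRingHom ℂ)) = 0)
    (n : σ → ℤ) : 0 < valuesGcd P n := by
  refine (valuesGcd_nonneg P n).lt_of_ne' fun h0 => h ⟨Int.castRingHom ℂ ∘ n, fun i => ?_⟩
  rw [eval_map, ← eval₂_comp, Finset.gcd_eq_zero_iff.1 h0 i (Finset.mem_univ i), map_zero]

theorem valuesGcd_dvd_of_C_mem_span {N : ℤ} (hN : C N ∈ Ideal.span (Set.range P))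
    (n : σ → ℤ) : valuesGcd P n ∣ N := by
  have hle : Ideal.span (Set.range P) ≤ (Ideal.span {valuesGcd P n}).comap (eval n) :=
    Ideal.span_le.2 <| by
      rintro _ ⟨i, rfl⟩
      exact Ideal.mem_span_singleton.2 (Finset.gcd_dvd (Finset.mem_univ i))
  simpa [Ideal.mem_span_singleton] using hle hN

theorem natAbs_valuesGcd_gcd_eq_of_dvd_sub {M : ℕ} {x y : σ → ℤ}
    (h : ∀ j, (M : ℤ) ∣ x j - y j) :
    (valuesGcd P x).natAbs.gcd M = (valuesGcd P y).natAbs.gcd M := by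
  have := congrArg Int.natAbs <| gcd_finset_gcd_eq_of_dvd_sub (s := Finset.univ)
    fun i _ => dvd_eval_sub_eval (P i) h
  simpa [valuesGcd, Int.natAbs_gcd, Int.gcd_eq_natAbs] using this

theorem exists_valuesGcd_eq_gcd_mul_gcd {N : ℤ} (hN : C N ∈ Ideal.span (Set.range P)) {u v : ℕ}
    (huv : u.Coprime v) (hD : u * v = N.natAbs) (n m : σ → ℤ) :
    ∃ x, valuesGcd P x = ((valuesGcd P n).natAbs.gcd u * (valuesGcd P m).natAbs.gcd v : ℕ) := by
  choose x hxn hxm using fun j => huv.isCoprime.exists_dvd_sub_and_dvd_sub (n j) (m j)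
  refine ⟨x, ?_⟩
  have hdvd : (valuesGcd P x).natAbs ∣ u * v :=
    hD ▸ Int.natAbs_dvd_natAbs.2 (valuesGcd_dvd_of_C_mem_span P hN x)
  rw [← natAbs_valuesGcd_gcd_eq_of_dvd_sub P hxn, ← natAbs_valuesGcd_gcd_eq_of_dvd_sub P hxm,
    ← Nat.Coprime.gcd_mul _ huv, Nat.gcd_eq_left hdvd, Int.natAbs_of_nonneg (valuesGcd_nonneg P x)]

theorem exists_valuesGcd_eq_gcd {N : ℤ} (hN : N ≠ 0) (hNmem : C N ∈ Ideal.span (Set.range P))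
    (n m : σ → ℤ) : ∃ x, gcd (valuesGcd P n) (valuesGcd P m) = valuesGcd P x := by
  have hdvd n : (valuesGcd P n).natAbs ∣ N.natAbs :=
    Int.natAbs_dvd_natAbs.2 (valuesGcd_dvd_of_C_mem_span P hNmem n)
  obtain ⟨u, v, huv, hD, hc⟩ :=
    Nat.exists_coprime_mul_eq_and_gcd_mul_gcd_eq_gcd (Int.natAbs_ne_zero.2 hN) (hdvd n) (hdvd m)
  obtain ⟨x, hx⟩ := exists_valuesGcd_eq_gcd_mul_gcd P hNmem huv hD n m
  exact ⟨x, by rw [hx, hc, ← Int.coe_gcd, Int.gcd_eq_natAbs]⟩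

theorem exists_valuesGcd_eq_lcm {N : ℤ} (hN : N ≠ 0) (hNmem : C N ∈ Ideal.span (Set.range P))
    (n m : σ → ℤ) : ∃ x, lcm (valuesGcd P n) (valuesGcd P m) = valuesGcd P x := by
  have hdvd n : (valuesGcd P n).natAbs ∣ N.natAbs :=
    Int.natAbs_dvd_natAbs.2 (valuesGcd_dvd_of_C_mem_span P hNmem n)
  obtain ⟨u, v, huv, hD, hc⟩ :=
    Nat.exists_coprime_mul_eq_and_gcd_mul_gcd_eq_lcm (Int.natAbs_ne_zero.2 hN) (hdvd n) (hdvd m)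
  obtain ⟨x, hx⟩ := exists_valuesGcd_eq_gcd_mul_gcd P hNmem huv hD n m
  exact ⟨x, by rw [hx, hc, ← Int.coe_lcm, Int.lcm]⟩

theorem finite_range_valuesGcd {N : ℤ} (hN : N ≠ 0) (hNmem : C N ∈ Ideal.span (Set.range P)) :
    (Set.range (valuesGcd P)).Finite := by
  refine (Set.finite_Icc 0 |N|).subset ?_
  rintro _ ⟨n, rfl⟩
  exact ⟨valuesGcd_nonneg P n,
    Int.le_of_dvd (abs_pos.2 hN) ((dvd_abs _ _).2 (valuesGcd_dvd_of_C_mem_span P hNmem n))⟩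

end MvPolynomial

theorem stmt2_general (s r : ℕ)
    (P : Fin s → MvPolynomial (Fin r) ℤ)
    (hnozero : ¬ ∃ z : Fin r → ℂ, ∀ i, eval z ((P i).map (Int.castRingHom ℂ)) = 0) :
    (Set.range fun n : Fin r → ℤ => Finset.univ.gcd fun i => eval n (P i)).Finite ∧
    (∀ x ∈ (Set.range fun n : Fin r → ℤ => Finset.univ.gcd fun i => eval n (P i)), 0 < x) ∧
    (∀ n m : Fin r → ℤ, ∃ n' : Fin r → ℤ,
      gcd (Finset.univ.gcd fun i => eval n (P i)) (Finset.univ.gcd fun i => eval m (P i))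
        = Finset.univ.gcd fun i => eval n' (P i)) ∧
    (∀ n m : Fin r → ℤ, ∃ n'' : Fin r → ℤ,
      lcm (Finset.univ.gcd fun i => eval n (P i)) (Finset.univ.gcd fun i => eval m (P i))
        = Finset.univ.gcd fun i => eval n'' (P i)) ∧
    (∃ a : ℤ, IsLeast (Set.range fun n : Fin r → ℤ => Finset.univ.gcd fun i => eval n (P i)) a ∧
      ∀ e ∈ (Set.range fun n : Fin r → ℤ => Finset.univ.gcd fun i => eval n (P i)), a ∣ e) ∧
    (∃ b : ℤ, IsGreatest (Set.range fun n : Fin r → ℤ => Finset.univ.gcd fun i => eval n (P i)) b ∧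
      ∀ e ∈ (Set.range fun n : Fin r → ℤ => Finset.univ.gcd fun i => eval n (P i)), e ∣ b) := by
  obtain ⟨N, hN, hNmem⟩ := exists_C_mem_span_of_not_exists_common_zero P hnozero
  have hfin := finite_range_valuesGcd P hN hNmem
  have hpos := valuesGcd_pos P hnozero
  have hgcd := exists_valuesGcd_eq_gcd P hN hNmem
  have hlcm := exists_valuesGcd_eq_lcm P hN hNmem
  exact ⟨hfin, Set.forall_mem_range.2 hpos, hgcd, hlcm, exists_isLeast_range_dvd hfin hpos hgcd,
    exists_isGreatest_range_dvd hfin hpos hlcm⟩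

/-- For nonzero polynomials with no common complex zero, the set of gcds of values
is a finite set of positive integers, stable under gcd and lcm; its least element
divides every element and its greatest element is a multiple of every element. -/
theorem stmt2 (s r : ℕ) (hs : 2 ≤ s) (hr : 1 ≤ r)
    (P : Fin s → MvPolynomial (Fin r) ℤ)
    (hP : ∀ i, P i ≠ 0)
    (hnozero : ¬ ∃ z : Fin r → ℂ, ∀ i, eval z ((P i).map (Int.castRingHom ℂ)) = 0) :
    (Set.range fun n : Fin r → ℤ => Finset.univ.gcd fun i => eval n (P i)).Finite ∧
    (∀ x ∈ (Set.range fun n : Fin r → ℤ => Finset.univ.gcd fun i => eval n (P i)), 0 < x) ∧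
    (∀ n m : Fin r → ℤ, ∃ n' : Fin r → ℤ,
      gcd (Finset.univ.gcd fun i => eval n (P i)) (Finset.univ.gcd fun i => eval m (P i))
        = Finset.univ.gcd fun i => eval n' (P i)) ∧
    (∀ n m : Fin r → ℤ, ∃ n'' : Fin r → ℤ,
      lcm (Finset.univ.gcd fun i => eval n (P i)) (Finset.univ.gcd fun i => eval m (P i))
        = Finset.univ.gcd fun i => eval n'' (P i)) ∧
    (∃ a : ℤ, IsLeast (Set.range fun n : Fin r → ℤ => Finset.univ.gcd fun i => eval n (P i)) a ∧
      ∀ e ∈ (Set.range fun n : Fin r → ℤ => Finset.univ.gcd fun i => eval n (P i)), a ∣ e) ∧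
    (∃ b : ℤ, IsGreatest (Set.range fun n : Fin r → ℤ => Finset.univ.gcd fun i => eval n (P i)) b ∧
      ∀ e ∈ (Set.range fun n : Fin r → ℤ => Finset.univ.gcd fun i => eval n (P i)), e ∣ b) :=
  stmt2_general s r P hnozero
end

section
/- Let P_1,…,P_s ∈ ℤ[x] (s ≥ 2) be nonzero one-variable polynomials and let H be the minimum of the normalized heights H(P_1),…,H(P_s). Then P_1,…,P_s are coprime in ℚ[x] if and only if there exists an integer n ≥ 2H + 3 such that gcd(P_1(n),…,P_s(n)) ≤ √n. -/
/-! If the `P i` are coprime over `ℚ`, a Bézout identity with denominators cleared puts a nonzero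
integer `M` in the ideal they generate in `ℤ[x]`, so every `gcd (P_i(n))` divides `M` and any
`n ≥ M²` works. Conversely, a common factor of positive degree over `ℚ` gives, by Gauss's lemma, an
integer common factor `E` of the same degree. Its complex roots are roots of a `P i` of height `H`,
so by Cauchy's bound they have modulus at most `1 + H`; hence for `n ≥ 2H + 3`,
`|E(n)| ≥ (n - 1 - H) ^ deg E ≥ (n + 1) / 2 > √n`, while `E(n)` divides the gcd. -/

open Polynomial

namespace Polynomial

theorem cauchyBound_le {K : Type*} [NormedDivisionRing K] {p : K[X]} {B : ℝ} (hB : 0 ≤ B)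
    (hcoeff : ∀ j < p.natDegree, ‖p.coeff j‖ ≤ B * ‖p.leadingCoeff‖) :
    (cauchyBound p : ℝ) ≤ B + 1 := by
  rcases eq_or_ne p 0 with rfl | hp
  · simpa using hB
  have hlc : 0 < ‖p.leadingCoeff‖ := norm_pos_iff.2 (leadingCoeff_ne_zero.2 hp)
  have hsup : (Finset.range p.natDegree).sup (‖p.coeff ·‖₊) ≤ (B * ‖p.leadingCoeff‖).toNNReal :=
    Finset.sup_le fun j hj => by
      rw [← NNReal.coe_le_coe, Real.coe_toNNReal _ (by positivity), coe_nnnorm]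
      exact hcoeff j (Finset.mem_range.1 hj)
  rw [cauchyBound, NNReal.coe_add, NNReal.coe_div, NNReal.coe_one, add_le_add_iff_right,
    coe_nnnorm, div_le_iff₀ hlc]
  calc _ ≤ ((B * ‖p.leadingCoeff‖).toNNReal : ℝ) := NNReal.coe_le_coe.2 hsup
    _ = B * ‖p.leadingCoeff‖ := Real.coe_toNNReal _ (by positivity)

theorem norm_le_one_add_of_isRoot_map {p : ℤ[X]} (hp : p ≠ 0) {H : ℚ} (hH : 0 ≤ H)
    (hcoeff : ∀ j < p.natDegree, |(p.coeff j : ℚ)| / |(p.leadingCoeff : ℚ)| ≤ H) {z : ℂ}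
    (hz : (p.map (Int.castRingHom ℂ)).IsRoot z) : ‖z‖ ≤ 1 + H := by
  have hinj : Function.Injective (Int.castRingHom ℂ) := RingHom.injective_int _
  have hlc : (0 : ℚ) < |(p.leadingCoeff : ℚ)| := by
    exact_mod_cast abs_pos.2 (leadingCoeff_ne_zero.2 hp)
  have hcoeff' : ∀ j < (p.map (Int.castRingHom ℂ)).natDegree,
      ‖(p.map (Int.castRingHom ℂ)).coeff j‖ ≤ H * ‖(p.map (Int.castRingHom ℂ)).leadingCoeff‖ := by
    intro j hj
    rw [natDegree_map_eq_of_injective hinj] at hj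
    have := (div_le_iff₀ hlc).1 (hcoeff j hj)
    rw [coeff_map, leadingCoeff_map_of_injective hinj, eq_intCast, eq_intCast,
      Complex.norm_intCast, Complex.norm_intCast]
    exact_mod_cast this
  have hbound := cauchyBound_le (by exact_mod_cast hH) hcoeff'
  have hroot := hz.norm_lt_cauchyBound ((Polynomial.map_ne_zero_iff hinj).2 hp)
  rw [← NNReal.coe_lt_coe, coe_nnnorm] at hroot
  linarith

theorem leadingCoeff_mul_pow_le_norm_eval {K : Type*} [NormedField K] [IsAlgClosed K]
    {p : K[X]} {R : ℝ} (hroots : ∀ z, p.IsRoot z → ‖z‖ ≤ R) {x : K} (hx : R ≤ ‖x‖) :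
    ‖p.leadingCoeff‖ * (‖x‖ - R) ^ p.natDegree ≤ ‖p.eval x‖ := by
  rcases eq_or_ne p 0 with rfl | hp
  · simp
  have hsplit : p.Splits := IsAlgClosed.splits p
  have hnorm : ‖(p.roots.map (x - ·)).prod‖ = (p.roots.map (‖x - ·‖)).prod :=
    (p.roots.prod_hom' normHom (x - ·)).symm
  rw [hsplit.eval_eq_prod_roots, norm_mul, hnorm, hsplit.natDegree_eq_card_roots,
    ← Multiset.prod_replicate, ← Multiset.map_const']
  gcongr
  refine Multiset.prod_map_le_prod_map₀ _ _ (fun _ _ => sub_nonneg.2 hx) fun z hz => ?_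
  calc ‖x‖ - R ≤ ‖x‖ - ‖z‖ := by gcongr; exact hroots z ((mem_roots hp).1 hz)
    _ ≤ ‖x - z‖ := norm_sub_norm_le x z

theorem pow_natDegree_le_abs_eval_int {p : ℤ[X]} (hp : p ≠ 0) {R : ℝ}
    (hroots : ∀ z : ℂ, (p.map (Int.castRingHom ℂ)).IsRoot z → ‖z‖ ≤ R) {n : ℤ} (hn : R ≤ n) :
    ((n : ℝ) - R) ^ p.natDegree ≤ |((p.eval n : ℤ) : ℝ)| := by
  have hinj : Function.Injective (Int.castRingHom ℂ) := RingHom.injective_int _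
  have hn' : R ≤ ‖(n : ℂ)‖ := hn.trans (by simpa using le_abs_self (n : ℝ))
  have key := leadingCoeff_mul_pow_le_norm_eval hroots hn'
  rw [leadingCoeff_map_of_injective hinj, natDegree_map_eq_of_injective hinj,
    eval_intCast_map] at key
  simp only [eq_intCast, Complex.norm_intCast] at key
  have hlc : (1 : ℝ) ≤ |(p.leadingCoeff : ℝ)| := by
    exact_mod_cast Int.one_le_abs (leadingCoeff_ne_zero.2 hp)
  calc ((n : ℝ) - R) ^ p.natDegree ≤ (|(n : ℝ)| - R) ^ p.natDegree := by
        gcongr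
        exact le_abs_self _
    _ ≤ |(p.leadingCoeff : ℝ)| * (|(n : ℝ)| - R) ^ p.natDegree :=
        le_mul_of_one_le_left (pow_nonneg (by linarith [le_abs_self (n : ℝ)]) _) hlc
    _ ≤ |((p.eval n : ℤ) : ℝ)| := key

theorem sqrt_lt_abs_eval_of_norm_root_le {E : ℤ[X]} (hdeg : E.natDegree ≠ 0) {H : ℝ} (hH : 0 ≤ H)
    (hroots : ∀ z : ℂ, (E.map (Int.castRingHom ℂ)).IsRoot z → ‖z‖ ≤ 1 + H) {n : ℤ}
    (hn : 2 * H + 3 ≤ n) : √(n : ℝ) < |((E.eval n : ℤ) : ℝ)| := by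
  have hE : E ≠ 0 := fun h => hdeg (h ▸ natDegree_zero)
  calc √(n : ℝ) < ((n : ℝ) + 1) / 2 := by
        rw [Real.sqrt_lt' (by linarith)]
        nlinarith
    _ ≤ (n : ℝ) - (1 + H) := by linarith
    _ ≤ ((n : ℝ) - (1 + H)) ^ E.natDegree := le_self_pow₀ (by linarith) hdeg
    _ ≤ |((E.eval n : ℤ) : ℝ)| := pow_natDegree_le_abs_eval_int hE hroots (by linarith)

theorem exists_natDegree_eq_forall_dvd_of_dvd_map {R K : Type*} [CommRing R] [IsDomain R]
    [NormalizedGCDMonoid R] [Field K] [Algebra R K] [IsFractionRing R K] (D : K[X]) :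
    ∃ E : R[X], E.natDegree = D.natDegree ∧ ∀ p : R[X], D ∣ p.map (algebraMap R K) → E ∣ p := by
  obtain ⟨b, hbR, hb⟩ := IsLocalization.integerNormalization_spec (nonZeroDivisors R) D
  set A := IsLocalization.integerNormalization (nonZeroDivisors R) D
  have hinj : Function.Injective (algebraMap R K) := IsFractionRing.injective R K
  have hb0 : algebraMap R K b ≠ 0 := IsFractionRing.to_map_ne_zero_of_mem_nonZeroDivisors hbR
  rw [Algebra.smul_def, algebraMap_apply] at hb
  refine ⟨A.primPart, ?_, fun p hp => ?_⟩
  · rw [natDegree_primPart, ← natDegree_map_eq_of_injective hinj, hb, natDegree_C_mul hb0]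
  · refine A.isPrimitive_primPart.dvd_of_fraction_map_dvd_fraction_map (K := K) ?_
    calc A.primPart.map (algebraMap R K) ∣ A.map (algebraMap R K) := map_dvd _ A.primPart_dvd
      _ = C (algebraMap R K b) * D := hb
      _ ∣ p.map (algebraMap R K) := (isUnit_C.2 hb0.isUnit).mul_left_dvd.2 hp

theorem span_range_eq_top_of_forall_dvd {K ι : Type*} [Field K] {f : ι → K[X]} {i : ι}
    (hi : f i ≠ 0) (h : ∀ D : K[X], (∀ i, D ∣ f i) → D.natDegree = 0) :
    Ideal.span (Set.range f) = ⊤ := by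
  set I := Ideal.span (Set.range f)
  set g := Submodule.IsPrincipal.generator I
  have hdvd : ∀ j, g ∣ f j := fun j =>
    (Submodule.IsPrincipal.mem_iff_generator_dvd I).1 (Ideal.subset_span ⟨j, rfl⟩)
  have hg : g ≠ 0 := fun hg => hi (zero_dvd_iff.1 (hg ▸ hdvd i))
  rw [← Ideal.span_singleton_generator I, Ideal.span_singleton_eq_top, isUnit_iff_degree_eq_zero]
  exact (degree_eq_iff_natDegree_eq hg).2 (h g hdvd)

-- `K[X]` is the localization of `R[X]` at the nonzero constants, so `1` lying in the extended
-- ideal means that some nonzero constant lies in the ideal itself.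
attribute [local instance] Polynomial.algebra Polynomial.isLocalization in
theorem exists_C_mem_span_of_span_map_eq_top {R K ι : Type*} [CommRing R] [IsDomain R] [Field K]
    [Algebra R K] [IsFractionRing R K] {P : ι → R[X]}
    (h : Ideal.span (Set.range fun i => (P i).map (algebraMap R K)) = ⊤) :
    ∃ M : R, M ≠ 0 ∧ C M ∈ Ideal.span (Set.range P) := by
  have hmap : Ideal.map (algebraMap R[X] K[X]) (Ideal.span (Set.range P)) = ⊤ := by
    rw [Ideal.map_span, ← Set.range_comp]
    exact h
  obtain ⟨⟨⟨a, ha⟩, ⟨_, M, hM, rfl⟩⟩, hMa⟩ := (IsLocalization.mem_map_algebraMap_iff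
    ((nonZeroDivisors R).map C) K[X]).1 (hmap ▸ Submodule.mem_top (x := 1))
  refine ⟨M, nonZeroDivisors.ne_zero hM, ?_⟩
  have hinj : Function.Injective (algebraMap R[X] K[X]) :=
    map_injective _ (IsFractionRing.injective R K)
  have haM : a = C M := hinj (by simpa using hMa.symm)
  exact haM ▸ ha

theorem gcd_eval_dvd_of_C_mem_span {R ι : Type*} [CommRing R] [IsDomain R] [NormalizedGCDMonoid R]
    [Fintype ι] {P : ι → R[X]} {M : R} (hM : C M ∈ Ideal.span (Set.range P)) (x : R) :
    Finset.univ.gcd (fun i => (P i).eval x) ∣ M := by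
  have hmem : M ∈ Ideal.map (evalRingHom x) (Ideal.span (Set.range P)) := by
    simpa using Ideal.mem_map_of_mem (evalRingHom x) hM
  rw [Ideal.map_span, ← Set.range_comp] at hmem
  refine Ideal.mem_span_singleton.1 (Ideal.span_le.2 ?_ hmem)
  rintro _ ⟨i, rfl⟩
  exact Ideal.mem_span_singleton.2 (Finset.gcd_dvd (Finset.mem_univ i))

end Polynomial

theorem exists_le_and_gcd_eval_le_sqrt {ι : Type*} [Fintype ι] {P : ι → ℤ[X]}
    (h : Ideal.span (Set.range fun i => (P i).map (Int.castRingHom ℚ)) = ⊤) (b : ℚ) :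
    ∃ n : ℤ, b ≤ n ∧ ((Finset.univ.gcd fun i => (P i).eval n : ℤ) : ℝ) ≤ √(n : ℝ) := by
  rw [← algebraMap_int_eq] at h
  obtain ⟨M, hM, hspan⟩ := exists_C_mem_span_of_span_map_eq_top (K := ℚ) h
  refine ⟨max ⌈b⌉ (M ^ 2), (Int.le_ceil b).trans (by exact_mod_cast le_max_left _ _), ?_⟩
  have hgcd : Finset.univ.gcd (fun i => (P i).eval (max ⌈b⌉ (M ^ 2))) ≤ |M| :=
    Int.le_of_dvd (abs_pos.2 hM) ((dvd_abs _ _).2 (gcd_eval_dvd_of_C_mem_span hspan _))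
  calc _ ≤ ((|M| : ℤ) : ℝ) := by exact_mod_cast hgcd
    _ = √((M ^ 2 : ℤ) : ℝ) := by push_cast; exact (Real.sqrt_sq_eq_abs _).symm
    _ ≤ _ := Real.sqrt_le_sqrt (by exact_mod_cast le_max_right _ _)

theorem abs_eval_le_gcd_eval {ι : Type*} [Fintype ι] {P : ι → ℤ[X]} {E : ℤ[X]}
    (hE : ∀ i, E ∣ P i) {n : ℤ} {i : ι} (hi : (P i).eval n ≠ 0) :
    |E.eval n| ≤ Finset.univ.gcd fun i => (P i).eval n := by
  have hgcd : Finset.univ.gcd (fun i => (P i).eval n) ≠ 0 :=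
    fun h0 => hi (Finset.gcd_eq_zero_iff.1 h0 i (Finset.mem_univ i))
  have hnonneg : 0 ≤ Finset.univ.gcd fun i => (P i).eval n := by
    rw [← Finset.normalize_gcd, ← Int.abs_eq_normalize]
    exact abs_nonneg _
  exact Int.le_of_dvd (hnonneg.lt_of_ne' hgcd)
    ((abs_dvd _ _).2 (Finset.dvd_gcd fun j _ => eval_dvd (hE j)))

theorem stmt6_general (s : ℕ)
    (P : Fin s → Polynomial ℤ) (hP : ∀ i, P i ≠ 0)
    (Hgt : Fin s → ℚ)
    (hHgt : ∀ i, IsGreatest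
      (insert 0 ((fun j => |((P i).coeff j : ℚ)| / |((P i).leadingCoeff : ℚ)|) ''
        {j : ℕ | j < (P i).natDegree})) (Hgt i))
    (H : ℚ) (hH : IsLeast (Set.range Hgt) H) :
    (∀ D : Polynomial ℚ, (∀ i, D ∣ (P i).map (Int.castRingHom ℚ)) → D.natDegree = 0) ↔
      ∃ n : ℤ, 2 * H + 3 ≤ (n : ℚ) ∧
        ((Finset.univ.gcd fun i => (P i).eval n : ℤ) : ℝ) ≤ Real.sqrt (n : ℝ) := by
  obtain ⟨i₀, hi₀⟩ := hH.1
  have hH₀ : 0 ≤ H := hi₀ ▸ (hHgt i₀).2 (Set.mem_insert 0 _)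
  have hroots : ∀ z : ℂ, ((P i₀).map (Int.castRingHom ℂ)).IsRoot z → ‖z‖ ≤ 1 + (H : ℝ) :=
    fun z => norm_le_one_add_of_isRoot_map (hP i₀) hH₀
      fun j hj => hi₀ ▸ (hHgt i₀).2 (Set.mem_insert_of_mem 0 ⟨j, hj, rfl⟩)
  constructor
  · intro hcop
    have hi₀' : (P i₀).map (Int.castRingHom ℚ) ≠ 0 :=
      (Polynomial.map_ne_zero_iff (RingHom.injective_int _)).2 (hP i₀)
    exact exists_le_and_gcd_eval_le_sqrt (span_range_eq_top_of_forall_dvd hi₀' hcop) _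
  · rintro ⟨n, hn, hgcd⟩ D hD
    by_contra hdeg
    obtain ⟨E, hEdeg, hEdvd⟩ := exists_natDegree_eq_forall_dvd_of_dvd_map (R := ℤ) D
    have hE : ∀ i, E ∣ P i := fun i => hEdvd _ (by rw [algebraMap_int_eq]; exact hD i)
    have hnR : 2 * (H : ℝ) + 3 ≤ n := by exact_mod_cast hn
    have hH₀R : (0 : ℝ) ≤ H := by exact_mod_cast hH₀
    have hPi₀ : (P i₀).eval n ≠ 0 := fun h0 => by
      have := hroots n (by rw [IsRoot, eval_intCast_map, Int.cast_id, h0, map_zero])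
      rw [Complex.norm_intCast] at this
      linarith [le_abs_self (n : ℝ)]
    have hEroots : ∀ z : ℂ, (E.map (Int.castRingHom ℂ)).IsRoot z → ‖z‖ ≤ 1 + (H : ℝ) :=
      fun z hz => hroots z (hz.dvd (map_dvd (Int.castRingHom ℂ) (hE i₀)))
    have hlt := sqrt_lt_abs_eval_of_norm_root_le (hEdeg ▸ hdeg) hH₀R hEroots hnR
    have hle : |((E.eval n : ℤ) : ℝ)| ≤ ((Finset.univ.gcd fun i => (P i).eval n : ℤ) : ℝ) := by
      exact_mod_cast abs_eval_le_gcd_eval hE hPi₀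
    linarith

/-- Coprimality criterion in one variable: nonzero polynomials `P_1,…,P_s ∈ ℤ[x]`
are coprime over ℚ iff there is an integer `n ≥ 2H+3` (with `H` the minimum of
the normalized heights) such that `gcd(P_1(n),…,P_s(n)) ≤ √n`. -/
theorem stmt6 (s : ℕ) (hs : 2 ≤ s)
    (P : Fin s → Polynomial ℤ) (hP : ∀ i, P i ≠ 0)
    (Hgt : Fin s → ℚ)
    (hHgt : ∀ i, IsGreatest
      (insert 0 ((fun j => |((P i).coeff j : ℚ)| / |((P i).leadingCoeff : ℚ)|) ''
        {j : ℕ | j < (P i).natDegree})) (Hgt i))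
    (H : ℚ) (hH : IsLeast (Set.range Hgt) H) :
    (∀ D : Polynomial ℚ, (∀ i, D ∣ (P i).map (Int.castRingHom ℚ)) → D.natDegree = 0) ↔
      ∃ n : ℤ, 2 * H + 3 ≤ (n : ℚ) ∧
        ((Finset.univ.gcd fun i => (P i).eval n : ℤ) : ℝ) ≤ Real.sqrt (n : ℝ) :=
  stmt6_general s P hP Hgt hHgt H hH
end

section
/- Let P_1,…,P_s ∈ ℤ[x_1,…,x_r] (s ≥ 2, r ≥ 1) be nonzero polynomials, let ℓ = max(deg P_1,…,deg P_s) (total degrees), let S be a nonempty finite subset of ℤ, and let k > 0 be an integer. If #{n ∈ S^r : d_n ≤ k}/(#S)^r > (2k+1)·ℓ/#S, then P_1,…,P_s are coprime polynomials. -/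
/-!
A nonconstant common divisor of the `P i` over `ℚ` yields, after clearing denominators and
factoring in the UFD `ℤ[x]`, a prime `π ∈ ℤ[x]` of positive degree dividing every `P i`.
Then `π(n) ∣ d_n`, so every `n` with `d_n ≤ k` is a zero of `π - c` for some `|c| ≤ k`, or
(when `d_n = 0`) a zero of the cofactor `Q = P i₀ / π`. By Schwartz–Zippel there are at most
`((2k+1) deg π + deg Q) #S^(r-1) ≤ (2k+1) ℓ #S^(r-1)` such points.
-/

open MvPolynomial Finset

namespace MvPolynomial

variable {σ : Type*}

section IsDomain

variable {R : Type*} [CommRing R] [IsDomain R]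

lemma card_zeros_mul_card_le [DecidableEq R] {n : ℕ} {p : MvPolynomial (Fin n) R} (hp : p ≠ 0)
    (S : Finset R) :
    #{x ∈ Fintype.piFinset fun _ ↦ S | eval x p = 0} * #S ≤ p.totalDegree * #S ^ n := by
  obtain rfl | hS := S.eq_empty_or_nonempty
  · simp
  have h := schwartz_zippel_totalDegree hp S
  rw [div_le_div_iff₀ (by positivity) (by simpa using hS)] at h
  exact_mod_cast h

lemma totalDegree_eq_zero_of_isUnit {p : MvPolynomial σ R} (hp : IsUnit p) :
    p.totalDegree = 0 := by
  simpa using totalDegree_le_of_dvd_of_isDomain hp.dvd one_ne_zero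

lemma exists_prime_dvd_of_totalDegree_pos [UniqueFactorizationMonoid R]
    {p : MvPolynomial σ R} (hp : 0 < p.totalDegree) :
    ∃ q, Prime q ∧ 0 < q.totalDegree ∧ q ∣ p := by
  induction p using UniqueFactorizationMonoid.induction_on_prime with
  | h₁ => simp at hp
  | h₂ p hu => simp [totalDegree_eq_zero_of_isUnit hu] at hp
  | h₃ a q ha hq ih =>
    by_cases hq0 : 0 < q.totalDegree
    · exact ⟨q, hq, hq0, dvd_mul_right q a⟩
    · rw [totalDegree_mul_of_isDomain hq.ne_zero ha] at hp
      obtain ⟨π, hπ, hπ0, hπa⟩ := ih (by omega)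
      exact ⟨π, hπ, hπ0, hπa.mul_left q⟩

lemma dvd_of_prime_dvd_C_mul {π f : MvPolynomial σ R} (hπ : Prime π) (hπ0 : 0 < π.totalDegree)
    {m : R} (hm : m ≠ 0) (h : π ∣ C m * f) : π ∣ f :=
  (hπ.dvd_or_dvd h).resolve_left fun hC ↦ by
    simpa [hπ0.ne'] using totalDegree_le_of_dvd_of_isDomain hC (C_ne_zero.mpr hm)

end IsDomain

lemma exists_map_intCast_eq_C_mul (g : MvPolynomial σ ℚ) :
    ∃ m : ℤ, m ≠ 0 ∧ ∃ b : MvPolynomial σ ℤ, map (Int.castRingHom ℚ) b = C (m : ℚ) * g := by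
  let _ : Algebra (MvPolynomial σ ℤ) (MvPolynomial σ ℚ) := algebraMvPolynomial
  obtain ⟨⟨b, t⟩, h⟩ := IsLocalization.surj ((nonZeroDivisors ℤ).map (C (σ := σ))) g
  obtain ⟨m, hm, ht⟩ := t.2
  refine ⟨m, nonZeroDivisors.ne_zero hm, b, ?_⟩
  simp only [algebraMap_def, algebraMap_int_eq, ← ht, map_C] at h
  rw [← h, mul_comm, eq_intCast]

lemma totalDegree_map_intCast (p : MvPolynomial σ ℤ) :
    (map (Int.castRingHom ℚ) p).totalDegree = p.totalDegree := by
  rw [totalDegree, totalDegree, support_map_of_injective p Int.cast_injective]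

lemma exists_prime_dvd_of_dvd_map_intCast {ι : Type*} (P : ι → MvPolynomial σ ℤ)
    {D : MvPolynomial σ ℚ} (hD : 0 < D.totalDegree)
    (hDP : ∀ i, D ∣ map (Int.castRingHom ℚ) (P i)) :
    ∃ π : MvPolynomial σ ℤ, Prime π ∧ 0 < π.totalDegree ∧ ∀ i, π ∣ P i := by
  obtain ⟨a, ha, E, hE⟩ := exists_map_intCast_eq_C_mul D
  have hD0 : D ≠ 0 := by rintro rfl; simp at hD
  have hEdeg : E.totalDegree = D.totalDegree := by
    rw [← totalDegree_map_intCast, hE,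
      totalDegree_mul_of_isDomain (C_ne_zero.mpr (by exact_mod_cast ha)) hD0, totalDegree_C,
      zero_add]
  obtain ⟨π, hπ, hπ0, hπE⟩ := exists_prime_dvd_of_totalDegree_pos (hEdeg ▸ hD)
  refine ⟨π, hπ, hπ0, fun i ↦ ?_⟩
  obtain ⟨G, hG⟩ := hDP i
  obtain ⟨b, hb, F, hF⟩ := exists_map_intCast_eq_C_mul G
  have hEF : E * F = C (a * b) * P i := map_injective (Int.castRingHom ℚ) Int.cast_injective <| by
    rw [map_mul, map_mul, hE, hF, map_C, hG, eq_intCast, Int.cast_mul, C_mul]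
    ring
  exact dvd_of_prime_dvd_C_mul hπ hπ0 (mul_ne_zero ha hb) (hEF ▸ hπE.mul_right F)

variable {ι : Type*} [Fintype ι]

lemma abs_eval_le_or_eval_eq_zero_of_gcd_le {P : ι → MvPolynomial σ ℤ} {π Q : MvPolynomial σ ℤ}
    (hπP : ∀ i, π ∣ P i) {i₀ : ι} (hi₀ : P i₀ = π * Q) {n : σ → ℤ} {k : ℕ}
    (hn : univ.gcd (fun i ↦ eval n (P i)) ≤ k) :
    |eval n π| ≤ k ∨ eval n Q = 0 := by
  rcases (Int.finsetGcd_nonneg (s := univ) (f := fun i ↦ eval n (P i))).eq_or_lt with h0 | hpos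
  · have hPi₀ : eval n (P i₀) = 0 := Finset.gcd_eq_zero_iff.mp h0.symm i₀ (mem_univ i₀)
    rw [hi₀, map_mul, mul_eq_zero] at hPi₀
    exact hPi₀.imp (fun h ↦ by simp [h]) id
  · have hdvd : eval n π ∣ univ.gcd (fun i ↦ eval n (P i)) :=
      Finset.dvd_gcd fun i _ ↦ map_dvd (eval n) (hπP i)
    exact .inl ((Int.le_of_dvd hpos ((abs_dvd _ _).mpr hdvd)).trans hn)

lemma card_filter_gcd_le_mul_card_le {r : ℕ} {P : ι → MvPolynomial (Fin r) ℤ}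
    {π Q : MvPolynomial (Fin r) ℤ} (hπ : 0 < π.totalDegree) (hQ : Q ≠ 0) (hπP : ∀ i, π ∣ P i)
    {i₀ : ι} (hi₀ : P i₀ = π * Q) (S : Finset ℤ) (k : ℕ) :
    #{n ∈ Fintype.piFinset fun _ ↦ S | univ.gcd (fun i ↦ eval n (P i)) ≤ k} * #S ≤
      ((2 * k + 1) * π.totalDegree + Q.totalDegree) * #S ^ r := by
  set A := Fintype.piFinset fun _ : Fin r ↦ S
  have hcover : {n ∈ A | univ.gcd (fun i ↦ eval n (P i)) ≤ k} ⊆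
      (Icc (-k : ℤ) k).biUnion (fun c ↦ {n ∈ A | eval n (π - C c) = 0}) ∪
        {n ∈ A | eval n Q = 0} := by
    intro n hn
    rw [mem_filter] at hn
    simp only [mem_union, mem_biUnion, mem_filter, mem_Icc, map_sub, eval_C, sub_eq_zero]
    rcases abs_eval_le_or_eval_eq_zero_of_gcd_le hπP hi₀ hn.2 with h | h
    · exact .inl ⟨eval n π, abs_le.mp h, hn.1, rfl⟩
    · exact .inr ⟨hn.1, h⟩
  have hzeros (c : ℤ) : #{n ∈ A | eval n (π - C c) = 0} * #S ≤ π.totalDegree * #S ^ r := by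
    have hne : π - C c ≠ 0 := fun h ↦ by
      rw [sub_eq_zero.mp h, totalDegree_C] at hπ
      exact hπ.false
    exact (card_zeros_mul_card_le hne S).trans (by gcongr; exact totalDegree_sub_C_le π c)
  calc #{n ∈ A | univ.gcd (fun i ↦ eval n (P i)) ≤ k} * #S
      ≤ (∑ c ∈ Icc (-k : ℤ) k, #{n ∈ A | eval n (π - C c) = 0} + #{n ∈ A | eval n Q = 0}) *
          #S := by
        gcongr
        exact (card_le_card hcover).trans
          ((card_union_le _ _).trans (by gcongr; exact card_biUnion_le))
    _ = ∑ c ∈ Icc (-k : ℤ) k, #{n ∈ A | eval n (π - C c) = 0} * #S +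
          #{n ∈ A | eval n Q = 0} * #S := by
        rw [add_mul, sum_mul]
    _ ≤ ∑ _c ∈ Icc (-k : ℤ) k, π.totalDegree * #S ^ r + Q.totalDegree * #S ^ r :=
        add_le_add (sum_le_sum fun c _ ↦ hzeros c) (card_zeros_mul_card_le hQ S)
    _ = ((2 * k + 1) * π.totalDegree + Q.totalDegree) * #S ^ r := by
        rw [sum_const, Int.card_Icc, smul_eq_mul,
          show (k + 1 - -k : ℤ).toNat = 2 * k + 1 by omega]
        ring

end MvPolynomial

theorem stmt7_general (s r : ℕ) (hs : 2 ≤ s)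
    (P : Fin s → MvPolynomial (Fin r) ℤ)
    (hP : ∀ i, P i ≠ 0)
    (l : ℕ) (hl : l = Finset.univ.sup fun i => (P i).totalDegree)
    (S : Finset ℤ) (hS : S.Nonempty)
    (k : ℕ)
    (hbig : ((2 * k + 1) * l : ℝ) / (S.card : ℝ) <
      (Nat.card {n : Fin r → ℤ // (∀ j, n j ∈ S) ∧
          (Finset.univ.gcd fun i => eval n (P i)) ≤ (k : ℤ)} : ℝ) / (S.card : ℝ) ^ r) :
    ∀ D : MvPolynomial (Fin r) ℚ,
      (∀ i, D ∣ (P i).map (Int.castRingHom ℚ)) → D.totalDegree = 0 := by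
  intro D hD
  by_contra hD0
  obtain ⟨π, hπ, hπ0, hπP⟩ := exists_prime_dvd_of_dvd_map_intCast P (Nat.pos_of_ne_zero hD0) hD
  let i₀ : Fin s := ⟨0, by omega⟩
  obtain ⟨Q, hQ⟩ := hπP i₀
  have hQ0 : Q ≠ 0 := by rintro rfl; exact hP i₀ (by simpa using hQ)
  have hdeg : π.totalDegree + Q.totalDegree ≤ l := by
    rw [← totalDegree_mul_of_isDomain hπ.ne_zero hQ0, ← hQ, hl]
    exact le_sup (f := fun i ↦ (P i).totalDegree) (mem_univ i₀)
  set bad := {n ∈ Fintype.piFinset fun _ : Fin r ↦ S | univ.gcd (fun i ↦ eval n (P i)) ≤ k}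
  have hcard : Nat.card {n : Fin r → ℤ // (∀ j, n j ∈ S) ∧
      (univ.gcd fun i => eval n (P i)) ≤ (k : ℤ)} = #bad := by
    rw [← Nat.card_eq_finsetCard]
    exact Nat.card_congr (Equiv.subtypeEquivRight fun n ↦ by simp [bad])
  have hbound : #bad * #S ≤ (2 * k + 1) * l * #S ^ r :=
    (card_filter_gcd_le_mul_card_le hπ0 hQ0 hπP hQ S k).trans (by gcongr; nlinarith)
  have hS0 : (0 : ℝ) < #S := by exact_mod_cast hS.card_pos
  rw [hcard, div_lt_div_iff₀ hS0 (by positivity)] at hbig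
  have hbound' : (#bad : ℝ) * #S ≤ (2 * k + 1) * l * #S ^ r := by exact_mod_cast hbound
  linarith

/-- Coprimality criterion: if the proportion of points `n ∈ S^r` with
`d_n ≤ k` exceeds `(2k+1)ℓ / #S`, then the polynomials are coprime. -/
theorem stmt7 (s r : ℕ) (hs : 2 ≤ s) (hr : 1 ≤ r)
    (P : Fin s → MvPolynomial (Fin r) ℤ)
    (hP : ∀ i, P i ≠ 0)
    (l : ℕ) (hl : l = Finset.univ.sup fun i => (P i).totalDegree)
    (S : Finset ℤ) (hS : S.Nonempty)
    (k : ℕ) (hk : 0 < k)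
    (hbig : ((2 * k + 1) * l : ℝ) / (S.card : ℝ) <
      (Nat.card {n : Fin r → ℤ // (∀ j, n j ∈ S) ∧
          (Finset.univ.gcd fun i => eval n (P i)) ≤ (k : ℤ)} : ℝ) / (S.card : ℝ) ^ r) :
    ∀ D : MvPolynomial (Fin r) ℚ,
      (∀ i, D ∣ (P i).map (Int.castRingHom ℚ)) → D.totalDegree = 0 :=
  stmt7_general s r hs P hP l hl S hS k hbig
end

section
/- Let P_1,…,P_s ∈ ℤ[x] (s ≥ 2) be nonzero coprime one-variable polynomials, and set d_n = gcd(P_1(n),…,P_s(n)) for n ∈ ℤ. Then there exists a nonzero integer δ that is a common multiple of all the d_n (i.e., d_n divides δ for every n ∈ ℤ) and such that the sequence (d_n)_{n∈ℤ} is periodic of period δ: d_{n+δ} = d_n for all n ∈ ℤ. Moreover, any nonzero δ ∈ ℤ of the form δ = B_1(x)P_1(x) + … + B_s(x)P_s(x) with B_1,…,B_s ∈ ℤ[x] has these properties. -/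
open Polynomial

/-- For nonzero coprime one-variable polynomials there is a nonzero common
multiple `δ` of all the gcds of values which is a period of the sequence `d_n`;
moreover any nonzero `δ` in the ideal `⟨P_1,…,P_s⟩ ∩ ℤ` works. -/
theorem stmt9 (s : ℕ) (hs : 2 ≤ s)
    (P : Fin s → Polynomial ℤ) (hP : ∀ i, P i ≠ 0)
    (hcop : ∀ D : Polynomial ℚ,
      (∀ i, D ∣ (P i).map (Int.castRingHom ℚ)) → D.natDegree = 0) :
    (∃ δ : ℤ, δ ≠ 0 ∧
      (∀ n : ℤ, (Finset.univ.gcd fun i => (P i).eval n) ∣ δ) ∧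
      (∀ n : ℤ, (Finset.univ.gcd fun i => (P i).eval (n + δ))
        = Finset.univ.gcd fun i => (P i).eval n)) ∧
    ∀ δ : ℤ, δ ≠ 0 →
      (∃ B : Fin s → Polynomial ℤ, ∑ i, B i * P i = Polynomial.C δ) →
      (∀ n : ℤ, (Finset.univ.gcd fun i => (P i).eval n) ∣ δ) ∧
      (∀ n : ℤ, (Finset.univ.gcd fun i => (P i).eval (n + δ))
        = Finset.univ.gcd fun i => (P i).eval n) := by
  have key : ∀ δ : ℤ, δ ≠ 0 →
      (∃ B : Fin s → Polynomial ℤ, ∑ i, B i * P i = Polynomial.C δ) →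
      (∀ n : ℤ, (Finset.univ.gcd fun i => (P i).eval n) ∣ δ) ∧
      (∀ n : ℤ, (Finset.univ.gcd fun i => (P i).eval (n + δ))
        = Finset.univ.gcd fun i => (P i).eval n) := by
    rintro δ hδ ⟨B, hB⟩
    have hdvd : ∀ n : ℤ, (Finset.univ.gcd fun i => (P i).eval n) ∣ δ := by
      intro n
      have h1 : (∑ i, B i * P i).eval n = δ := by rw [hB, eval_C]
      rw [eval_finset_sum] at h1
      rw [← h1]
      refine Finset.dvd_sum fun i _ => ?_
      rw [eval_mul]
      exact Dvd.dvd.mul_left (Finset.gcd_dvd (Finset.mem_univ i)) _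
    refine ⟨hdvd, fun n => ?_⟩
    have hδd : ∀ i : Fin s, δ ∣ (P i).eval (n + δ) - (P i).eval n := by
      intro i
      have := sub_dvd_eval_sub (n + δ) n (P i)
      simpa using this
    have fwd : (Finset.univ.gcd fun i => (P i).eval n) ∣
        Finset.univ.gcd fun i => (P i).eval (n + δ) := by
      refine Finset.dvd_gcd fun i _ => ?_
      have h2 := (hdvd n).trans (hδd i)
      have h3 : (Finset.univ.gcd fun i => (P i).eval n) ∣ (P i).eval n :=
        Finset.gcd_dvd (Finset.mem_univ i)
      simpa using dvd_add h2 h3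
    have back : (Finset.univ.gcd fun i => (P i).eval (n + δ)) ∣
        Finset.univ.gcd fun i => (P i).eval n := by
      refine Finset.dvd_gcd fun i _ => ?_
      have h2 := (hdvd (n + δ)).trans (hδd i)
      have h3 : (Finset.univ.gcd fun j => (P j).eval (n + δ)) ∣ (P i).eval (n + δ) :=
        Finset.gcd_dvd (Finset.mem_univ i)
      simpa using dvd_sub h3 h2
    exact dvd_antisymm_of_normalize_eq Finset.normalize_gcd Finset.normalize_gcd back fwd
  refine ⟨?_, key⟩
  -- construct a nonzero δ in the ideal
  set φ := Int.castRingHom ℚ with hφ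
  set Q : Fin s → Polynomial ℚ := fun i => (P i).map φ with hQdef
  have hφinj : Function.Injective φ := Int.cast_injective
  have hQne : ∀ i, Q i ≠ 0 := fun i => (Polynomial.map_ne_zero_iff hφinj).mpr (hP i)
  have h1 : (1 : Polynomial ℚ) ∈ Ideal.span (Set.range Q) := by
    obtain ⟨g, hg⟩ := (IsPrincipalIdealRing.principal (Ideal.span (Set.range Q))).principal
    have hgd : ∀ i, g ∣ Q i := by
      intro i
      have : Q i ∈ Ideal.span (Set.range Q) := Ideal.subset_span ⟨i, rfl⟩
      rw [hg] at this
      exact (Ideal.mem_span_singleton).mp this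
    have hg0 : g ≠ 0 := by
      intro h
      exact hQne ⟨0, by omega⟩ (by simpa [h] using hgd ⟨0, by omega⟩)
    have hdeg : g.natDegree = 0 := hcop g hgd
    have hunit : IsUnit g := by
      rw [← eq_C_coeff_zero_iff_natDegree_eq_zero] at hdeg
      rw [hdeg]
      refine Polynomial.isUnit_C.mpr (isUnit_iff_ne_zero.mpr ?_)
      intro h
      exact hg0 (by rw [hdeg, h, map_zero])
    have : Ideal.span (Set.range Q) = ⊤ := by
      rw [hg]; exact Ideal.span_singleton_eq_top.mpr hunit
    rw [this]; trivial
  obtain ⟨c, hc⟩ := Ideal.mem_span_range_iff_exists_fun.mp h1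
  -- clear denominators
  have hnorm : ∀ i : Fin s, ∃ b : ℤ, b ≠ 0 ∧ ∃ R : Polynomial ℤ,
      R.map φ = Polynomial.C (b : ℚ) * c i := by
    intro i
    obtain ⟨b, hb⟩ := IsLocalization.integerNormalization_map_to_map
      (nonZeroDivisors ℤ) (c i)
    refine ⟨(b : ℤ), nonZeroDivisors.coe_ne_zero b,
      IsLocalization.integerNormalization (nonZeroDivisors ℤ) (c i), ?_⟩
    rw [show (algebraMap ℤ ℚ) = φ from rfl] at hb
    rw [hb, ← algebraMap_smul ℚ ((b : ℤ)) (c i), Polynomial.smul_eq_C_mul]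
    rfl
  choose b hb0 R hR using hnorm
  set N : ℤ := ∏ i, b i with hN
  have hN0 : N ≠ 0 := Finset.prod_ne_zero_iff.mpr fun i _ => hb0 i
  set Bi : Fin s → Polynomial ℤ := fun i =>
    Polynomial.C (∏ j ∈ Finset.univ.erase i, b j) * R i with hBi
  have hmain : ∑ i, Bi i * P i = Polynomial.C N := by
    apply Polynomial.map_injective φ hφinj
    rw [Polynomial.map_sum, Polynomial.map_C]
    have : ∀ i : Fin s, ((Bi i * P i).map φ) = Polynomial.C (N : ℚ) * (c i * Q i) := by
      intro i
      rw [hBi]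
      rw [Polynomial.map_mul, Polynomial.map_mul, Polynomial.map_C, hR i]
      have hprod : ((∏ j ∈ Finset.univ.erase i, b j : ℤ) : ℚ) * ((b i : ℤ) : ℚ)
          = (N : ℚ) := by
        rw [← Int.cast_mul, Finset.prod_erase_mul _ _ (Finset.mem_univ i)]
      have hQi : Q i = (P i).map φ := rfl
      rw [hQi, ← hprod, Polynomial.C_mul]
      simp only [eq_intCast]
      ring
    rw [Finset.sum_congr rfl fun i _ => this i, ← Finset.mul_sum, hc, mul_one]
    rfl
  exact ⟨N, hN0, key N hN0 ⟨Bi, hmain⟩⟩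
end

section
/- Let k be an infinite field and P_1(a,x),…,P_s(a,x) ∈ k[a_1,…,a_m, x_1,…,x_r] (s ≥ 2, m ≥ 1, r ≥ 1) be nonzero polynomials. The following are equivalent: (i) every common divisor of P_1,…,P_s in k[a,x] belongs to k[a]; (ii) P_1,…,P_s are coprime in k(a)[x], i.e., no polynomial of positive degree in k(a)[x_1,…,x_r] divides each P_i; (iii) there exists a nonzero G ∈ k[a] such that for every a* ∈ k^m with G(a*) ≠ 0, the specialized polynomials P_1(a*,x),…,P_s(a*,x) are coprime in k[x]; (iv) there exists a Zariski-dense subset Y ⊆ k^m (meaning: for every nonzero G ∈ k[a] there is a* ∈ Y with G(a*) ≠ 0) such that for every a* ∈ Y the polynomials P_1(a*,x),…,P_s(a*,x) are coprime in k[x]. -/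
/-!
Put `R = k[a]`, so that `k[a,x] = R[x]` is a UFD and `k(a)[x]` is its localization at the
nonzero constants. Clearing denominators, a nonconstant common divisor over `k(a)` has a prime
factor in `R[x]` that is still a nonunit over `k(a)`, and such a prime divides an element of
`R[x]` as soon as it divides it over `k(a)`; this gives (i) ⇔ (ii). For (i) ⇒ (iii), regard the
`P_i` as polynomials in the single variable `x_j` over `R_j = R[x_i : i ≠ j]`. The same descent
from `Frac(R_j)[x_j]`, a principal ideal domain, shows that the ideal generated by the `P_i`
contains a nonzero `h_j ∈ R_j`. Take `G` to be a product of nonzero coefficients of the `h_j`: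
if `G(a*) ≠ 0`, every `h_j(a*, x)` is nonzero, so a common divisor of the `P_i(a*, x)` has
degree `0` in each `x_j`. For (iv) ⇒ (i), a common divisor in `R[x]` with a nonconstant monomial
keeps that monomial at a point of `Y` where its coefficient does not vanish.
-/

open MvPolynomial

/-- The natural map `k[a,x] → k(a)[x]`, sending the variables `a_j` to the
corresponding constants of the fraction field `k(a)` and the `x_i` to themselves. -/
noncomputable def toFracField (k : Type*) [Field k] (m r : ℕ) :
    MvPolynomial (Fin m ⊕ Fin r) k →+*
      MvPolynomial (Fin r) (FractionRing (MvPolynomial (Fin m) k)) :=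
  eval₂Hom
    ((C : FractionRing (MvPolynomial (Fin m) k) →+* _).comp
      ((algebraMap (MvPolynomial (Fin m) k) (FractionRing (MvPolynomial (Fin m) k))).comp
        (C : k →+* MvPolynomial (Fin m) k)))
    (Sum.elim
      (fun j => C (algebraMap (MvPolynomial (Fin m) k)
        (FractionRing (MvPolynomial (Fin m) k)) (X j)))
      fun i => X i)

/-- Specialization `k[a,x] → k[x]`, `a ↦ a*`. -/
noncomputable def specA (k : Type*) [Field k] (m r : ℕ) (a : Fin m → k) :
    MvPolynomial (Fin m ⊕ Fin r) k →+* MvPolynomial (Fin r) k :=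
  eval₂Hom (C : k →+* MvPolynomial (Fin r) k) (Sum.elim (fun j => C (a j)) fun i => X i)

open scoped Polynomial nonZeroDivisors

theorem UniqueFactorizationMonoid.exists_prime_dvd_not_isUnit_map {α β F : Type*}
    [CommMonoidWithZero α] [UniqueFactorizationMonoid α] [Monoid β] [FunLike F α β]
    [MonoidHomClass F α β] (f : F) {a : α} (ha : a ≠ 0) (hfa : ¬IsUnit (f a)) :
    ∃ p, Prime p ∧ p ∣ a ∧ ¬IsUnit (f p) := by
  induction a using UniqueFactorizationMonoid.induction_on_prime with
  | h₁ => exact absurd rfl ha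
  | h₂ x hx => exact absurd (hx.map f) hfa
  | h₃ a p ha0 hp ih =>
    by_cases hfp : IsUnit (f p)
    · obtain ⟨q, hq, hqa, hfq⟩ := ih ha0 fun hfa' => hfa (by rw [map_mul]; exact hfp.mul hfa')
      exact ⟨q, hq, hqa.mul_left p, hfq⟩
    · exact ⟨p, hp, dvd_mul_right p a, hfp⟩

theorem Ideal.dvd_map_of_mem_span_range {A B ι : Type*} [CommSemiring A] [CommSemiring B]
    (φ : A →+* B) {q : ι → A} {f : A} (hf : f ∈ Ideal.span (Set.range q)) {d : B}
    (hd : ∀ i, d ∣ φ (q i)) : d ∣ φ f := by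
  have hle : Ideal.span (Set.range q) ≤ (Ideal.span {d}).comap φ :=
    Ideal.span_le.mpr <| by
      rintro _ ⟨i, rfl⟩
      exact Ideal.mem_span_singleton.mpr (hd i)
  exact Ideal.mem_span_singleton.mp (hle hf)

namespace IsLocalization

variable {A B : Type*} [CommRing A] [CommRing B] [Algebra A B]

theorem _root_.Prime.dvd_of_algebraMap_dvd_algebraMap (S : Submonoid A) [IsLocalization S B]
    {p f : A} (hp : Prime p) (hpB : ¬IsUnit (algebraMap A B p))
    (h : algebraMap A B p ∣ algebraMap A B f) : p ∣ f := by
  have hS : ∀ s ∈ S, ¬p ∣ s := fun s hs hps =>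
    hpB (isUnit_of_dvd_unit (map_dvd _ hps) (IsLocalization.map_units B ⟨s, hs⟩))
  obtain ⟨c, hc⟩ := h
  obtain ⟨⟨c₀, t⟩, ht⟩ := IsLocalization.surj S c
  have heq : algebraMap A B (p * c₀) = algebraMap A B (t * f) := by
    rw [map_mul, map_mul, ← ht, hc]
    ring
  obtain ⟨u, hu⟩ := (IsLocalization.eq_iff_exists S B).mp heq
  have hdvd : p ∣ u * (t * f) := hu ▸ (dvd_mul_right p c₀).mul_left _
  rcases hp.dvd_or_dvd hdvd with hpu | hptf
  · exact absurd hpu (hS _ u.2)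
  rcases hp.dvd_or_dvd hptf with hpt | hpf
  · exact absurd hpt (hS _ t.2)
  · exact hpf

variable [UniqueFactorizationMonoid A] {ι : Type*} {q : ι → A}

theorem exists_prime_dvd_of_dvd_algebraMap (S : Submonoid A) [IsLocalization S B] {b : B}
    (hb0 : b ≠ 0) (hb : ¬IsUnit b) (hdvd : ∀ i, b ∣ algebraMap A B (q i)) :
    ∃ p : A, Prime p ∧ ¬IsUnit (algebraMap A B p) ∧ ∀ i, p ∣ q i := by
  obtain ⟨⟨a, s⟩, hs : b * algebraMap A B s = algebraMap A B a⟩ := IsLocalization.surj S b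
  have hsu : IsUnit (algebraMap A B s) := IsLocalization.map_units B s
  have ha0 : a ≠ 0 := by
    rintro rfl
    rw [map_zero] at hs
    exact hb0 (hsu.mul_left_eq_zero.mp hs)
  have hau : ¬IsUnit (algebraMap A B a) := by
    rw [← hs, hsu.mul_right_iff]
    exact hb
  obtain ⟨p, hp, hpa, hpB⟩ :=
    UniqueFactorizationMonoid.exists_prime_dvd_not_isUnit_map (algebraMap A B) ha0 hau
  have hpb : algebraMap A B p ∣ b := by
    rw [← hsu.dvd_mul_right, hs]
    exact map_dvd _ hpa
  exact ⟨p, hp, hpB, fun i => hp.dvd_of_algebraMap_dvd_algebraMap S hpB (hpb.trans (hdvd i))⟩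

theorem exists_mem_span_range_of_forall_prime (S : Submonoid A) [IsLocalization S B]
    [IsPrincipalIdealRing B] (hq : ∃ i, algebraMap A B (q i) ≠ 0)
    (hcop : ∀ p : A, Prime p → (∀ i, p ∣ q i) → IsUnit (algebraMap A B p)) :
    ∃ s ∈ S, s ∈ Ideal.span (Set.range q) := by
  set I := Ideal.span (Set.range q)
  have htop : I.map (algebraMap A B) = ⊤ := by
    obtain ⟨g, hg⟩ := (IsPrincipalIdealRing.principal (I.map (algebraMap A B))).principal
    rw [Ideal.submodule_span_eq] at hg
    have hgq : ∀ i, g ∣ algebraMap A B (q i) := fun i => by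
      rw [← Ideal.mem_span_singleton, ← hg]
      exact Ideal.mem_map_of_mem _ (Ideal.subset_span ⟨i, rfl⟩)
    obtain ⟨i, hi⟩ := hq
    have hg0 : g ≠ 0 := by
      rintro rfl
      exact hi (zero_dvd_iff.mp (hgq i))
    rw [hg, Ideal.span_singleton_eq_top]
    by_contra hgu
    obtain ⟨p, hp, hpB, hpq⟩ := exists_prime_dvd_of_dvd_algebraMap S hg0 hgu hgq
    exact hpB (hcop p hp hpq)
  by_contra! h
  exact (IsLocalization.map_algebraMap_ne_top_iff_disjoint S B I).mpr
    (Set.disjoint_left.mpr fun s hs hsI => h s hs hsI) htop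

end IsLocalization

namespace MvPolynomial

theorem totalDegree_map_of_injective {σ R L : Type*} [CommSemiring R] [CommSemiring L]
    {φ : R →+* L} (hφ : Function.Injective φ) (p : MvPolynomial σ R) :
    (map φ p).totalDegree = p.totalDegree := by
  simp only [totalDegree, support_map_of_injective p hφ]

theorem totalDegree_eq_zero_of_forall_map {σ R L Y : Type*} [CommSemiring R] [CommSemiring L]
    (φ : Y → R →+* L) (hφ : ∀ c : R, c ≠ 0 → ∃ y, φ y c ≠ 0) {D : MvPolynomial σ R}
    (hD : ∀ y, (map (φ y) D).totalDegree = 0) : D.totalDegree = 0 := by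
  rw [totalDegree_eq_zero_iff]
  intro t ht
  obtain ⟨y, hy⟩ := hφ _ (mem_support_iff.mp ht)
  exact (totalDegree_eq_zero_iff σ _).mp (hD y) t (by rwa [mem_support_iff, coeff_map])

theorem exists_eval_ne_zero {σ R : Type*} [CommRing R] [IsDomain R] [Infinite R]
    {G : MvPolynomial σ R} (hG : G ≠ 0) : ∃ a : σ → R, eval a G ≠ 0 := by
  by_contra! h
  exact hG (funext fun a => by rw [h a, map_zero])

def HasOnlyConstantCommonDivisors {σ R ι : Type*} [CommSemiring R]
    (q : ι → MvPolynomial σ R) : Prop :=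
  ∀ D : MvPolynomial σ R, (∀ i, D ∣ q i) → D.totalDegree = 0

theorem HasOnlyConstantCommonDivisors.of_forall_map {σ R L Y ι : Type*} [CommSemiring R]
    [CommSemiring L] {q : ι → MvPolynomial σ R} (φ : Y → R →+* L)
    (hφ : ∀ c : R, c ≠ 0 → ∃ y, φ y c ≠ 0)
    (h : ∀ y, HasOnlyConstantCommonDivisors fun i => map (φ y) (q i)) :
    HasOnlyConstantCommonDivisors q := fun _ hD =>
  totalDegree_eq_zero_of_forall_map φ hφ fun y => h y _ fun i => map_dvd _ (hD i)

section FractionRing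

variable {σ R K ι : Type*} [CommRing R] [UniqueFactorizationMonoid R] [Field K]
  [Algebra R K] [IsFractionRing R K]

attribute [local instance] algebraMvPolynomial in
theorem hasOnlyConstantCommonDivisors_map_algebraMap_iff (q : ι → MvPolynomial σ R) :
    (HasOnlyConstantCommonDivisors fun i => map (algebraMap R K) (q i)) ↔
      HasOnlyConstantCommonDivisors q := by
  have hinj := IsFractionRing.injective R K
  refine ⟨fun h D hD => ?_, fun h D hD => ?_⟩
  · rw [← totalDegree_map_of_injective hinj]
    exact h _ fun i => map_dvd _ (hD i)
  by_contra hD0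
  have hne : D ≠ 0 := by
    rintro rfl
    exact hD0 totalDegree_zero
  have hnu : ¬IsUnit D := fun hu => hD0 (isUnit_iff_totalDegree_of_isReduced.mp hu).2
  obtain ⟨p, hp, hpK, hpq⟩ :=
    IsLocalization.exists_prime_dvd_of_dvd_algebraMap (R⁰.map (C (σ := σ))) hne hnu hD
  have hpC := totalDegree_eq_zero_iff_eq_C.mp (h p hpq)
  have hc : p.coeff 0 ≠ 0 := fun h0 => hp.ne_zero (by rw [hpC, h0, C_0])
  apply hpK
  rw [hpC, algebraMap_def, map_C]
  exact (isUnit_iff_ne_zero.mpr ((map_ne_zero_iff _ hinj).mpr hc)).map C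

end FractionRing

section SplitVar

variable {σ : Type*} [DecidableEq σ]

noncomputable def splitVarEquiv (R : Type*) [CommSemiring R] (j : σ) :
    MvPolynomial σ R ≃ₐ[R] Polynomial (MvPolynomial {i // i ≠ j} R) :=
  (renameEquiv R (Equiv.optionSubtypeNe j).symm).trans (optionEquivLeft R _)

variable {R : Type*} [CommSemiring R]

theorem natDegree_splitVarEquiv (j : σ) (p : MvPolynomial σ R) :
    (splitVarEquiv R j p).natDegree = degreeOf j p := by
  rw [splitVarEquiv, AlgEquiv.trans_apply, natDegree_optionEquivLeft, renameEquiv_apply,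
    ← Equiv.optionSubtypeNe_symm_self j,
    degreeOf_rename_of_injective (Equiv.optionSubtypeNe j).symm.injective]

theorem splitVarEquiv_map {L : Type*} [CommSemiring L] (φ : R →+* L) (j : σ)
    (p : MvPolynomial σ R) :
    splitVarEquiv L j (map φ p) = (splitVarEquiv R j p).map (map φ) := by
  have : (splitVarEquiv L j).toRingEquiv.toRingHom.comp (map φ) =
      (Polynomial.mapRingHom (map φ)).comp (splitVarEquiv R j).toRingEquiv.toRingHom := by
    refine ringHom_ext (fun c => ?_) fun i => ?_
    · simp [splitVarEquiv, optionEquivLeft_C]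
    · rcases eq_or_ne i j with rfl | hij
      · simp [splitVarEquiv, optionEquivLeft_X_none]
      · simp [splitVarEquiv, Equiv.optionSubtypeNe_symm_of_ne hij, optionEquivLeft_X_some]
  exact RingHom.congr_fun this p

end SplitVar

section Specialization

variable {σ R ι : Type*} [CommRing R] [IsDomain R] [UniqueFactorizationMonoid R]
  {q : ι → MvPolynomial σ R}

theorem HasOnlyConstantCommonDivisors.exists_C_mem_span [DecidableEq σ]
    (h : HasOnlyConstantCommonDivisors q) (hq : ∃ i, q i ≠ 0) (j : σ) :
    ∃ c : MvPolynomial {i // i ≠ j} R, c ≠ 0 ∧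
      (splitVarEquiv R j).symm (Polynomial.C c) ∈ Ideal.span (Set.range q) := by
  set Ψ := splitVarEquiv R j
  let R' := MvPolynomial {i // i ≠ j} R
  let := Polynomial.algebra R' (FractionRing R')
  have := Polynomial.isLocalization R'⁰ (FractionRing R')
  have hinj : Function.Injective (algebraMap R' (FractionRing R')) :=
    IsFractionRing.injective R' (FractionRing R')
  have hΨq : ∃ i, algebraMap R'[X] (FractionRing R')[X] (Ψ (q i)) ≠ 0 := by
    obtain ⟨i, hi⟩ := hq
    refine ⟨i, ?_⟩
    rw [Polynomial.algebraMap_def, Polynomial.coe_mapRingHom, Ne,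
      Polynomial.map_eq_zero_iff hinj, map_eq_zero_iff _ Ψ.injective]
    exact hi
  have hcop : ∀ p : R'[X], Prime p → (∀ i, p ∣ Ψ (q i)) →
      IsUnit (algebraMap R'[X] (FractionRing R')[X] p) := by
    intro p hp hpq
    have hdeg : p.natDegree = 0 := by
      have htot := h (Ψ.symm p) fun i => by simpa using map_dvd Ψ.symm (hpq i)
      rw [← Ψ.apply_symm_apply p, natDegree_splitVarEquiv, ← Nat.le_zero, ← htot]
      exact degreeOf_le_totalDegree _ _
    obtain ⟨c, rfl⟩ := Polynomial.natDegree_eq_zero.mp hdeg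
    have hc : c ≠ 0 := fun h0 => hp.ne_zero (by rw [h0, Polynomial.C_0])
    rw [Polynomial.algebraMap_def, Polynomial.coe_mapRingHom, Polynomial.map_C]
    exact (isUnit_iff_ne_zero.mpr ((map_ne_zero_iff _ hinj).mpr hc)).map Polynomial.C
  obtain ⟨_, ⟨c, hc, rfl⟩, hs⟩ :=
    IsLocalization.exists_mem_span_range_of_forall_prime (R'⁰.map Polynomial.C) hΨq hcop
  refine ⟨c, nonZeroDivisors.ne_zero hc, ?_⟩
  simpa [Ideal.map_span, ← Set.range_comp, Function.comp_def] using
    Ideal.mem_map_of_mem Ψ.symm hs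

theorem HasOnlyConstantCommonDivisors.exists_ne_zero_forall_map [Finite σ]
    (h : HasOnlyConstantCommonDivisors q) (hq : ∃ i, q i ≠ 0) (L : Type*) [CommRing L]
    [IsDomain L] :
    ∃ G : R, G ≠ 0 ∧ ∀ φ : R →+* L, φ G ≠ 0 →
      HasOnlyConstantCommonDivisors fun i => map φ (q i) := by
  classical
  have := Fintype.ofFinite σ
  choose c hc hspan using h.exists_C_mem_span hq
  choose t ht using fun j => support_nonempty.mpr (hc j)
  refine ⟨∏ j, coeff (t j) (c j),
    Finset.prod_ne_zero_iff.mpr fun j _ => mem_support_iff.mp (ht j), fun φ hφ D hD => ?_⟩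
  rw [map_prod, Finset.prod_ne_zero_iff] at hφ
  have hdeg : ∀ j, degreeOf j D = 0 := fun j => by
    have hcφ : map φ (c j) ≠ 0 := fun h0 =>
      hφ j (Finset.mem_univ _) (by rw [← coeff_map, h0, coeff_zero])
    have hdvd : splitVarEquiv L j D ∣ Polynomial.C (map φ (c j)) := by
      have := map_dvd (splitVarEquiv L j) (Ideal.dvd_map_of_mem_span_range (map φ) (hspan j) hD)
      rwa [splitVarEquiv_map, AlgEquiv.apply_symm_apply, Polynomial.map_C] at this
    rw [← natDegree_splitVarEquiv]
    simpa using Polynomial.natDegree_le_of_dvd hdvd (Polynomial.C_ne_zero.mpr hcφ)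
  rw [totalDegree_eq_zero_iff]
  exact fun t ht j => Nat.eq_zero_of_le_zero (hdeg j ▸ monomial_le_degreeOf j ht)

end Specialization

noncomputable def sumSwapAlgEquiv (k α β : Type*) [CommSemiring k] :
    MvPolynomial (α ⊕ β) k ≃ₐ[k] MvPolynomial β (MvPolynomial α k) :=
  (renameEquiv k (Equiv.sumComm α β)).trans (sumAlgEquiv k β α)

section SumSwap

variable {k α β : Type*} [CommSemiring k]

@[simp] theorem sumSwapAlgEquiv_C (c : k) :
    sumSwapAlgEquiv k α β (C c) = C (C c) := by
  simp [sumSwapAlgEquiv, sumAlgEquiv_C_inl]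

@[simp] theorem sumSwapAlgEquiv_X_inl (a : α) :
    sumSwapAlgEquiv k α β (X (Sum.inl a)) = C (X a) := by
  simp [sumSwapAlgEquiv, sumAlgEquiv_X_inr]

@[simp] theorem sumSwapAlgEquiv_X_inr (b : β) :
    sumSwapAlgEquiv k α β (X (Sum.inr b)) = X b := by
  simp [sumSwapAlgEquiv, sumAlgEquiv_X_inl]

theorem sumSwapAlgEquiv_rename_inl (E : MvPolynomial α k) :
    sumSwapAlgEquiv k α β (rename Sum.inl E) = C E := by
  induction E using MvPolynomial.induction_on <;> simp_all

theorem forall_dvd_eq_rename_inl_iff {ι : Type*} (P : ι → MvPolynomial (α ⊕ β) k) :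
    (∀ D, (∀ i, D ∣ P i) → ∃ E, D = rename Sum.inl E) ↔
      HasOnlyConstantCommonDivisors fun i => sumSwapAlgEquiv k α β (P i) := by
  set Θ := sumSwapAlgEquiv k α β
  refine ⟨fun h D hD => ?_, fun h D hD => ?_⟩
  · obtain ⟨E, hE⟩ := h (Θ.symm D) fun i => by simpa using map_dvd Θ.symm (hD i)
    rw [← Θ.apply_symm_apply D, hE, sumSwapAlgEquiv_rename_inl, totalDegree_C]
  · refine ⟨coeff 0 (Θ D), Θ.injective ?_⟩
    rw [sumSwapAlgEquiv_rename_inl]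
    exact totalDegree_eq_zero_iff_eq_C.mp (h _ fun i => map_dvd Θ (hD i))

end SumSwap

end MvPolynomial

theorem toFracField_apply (k : Type*) [Field k] (m r : ℕ)
    (p : MvPolynomial (Fin m ⊕ Fin r) k) :
    toFracField k m r p =
      map (algebraMap (MvPolynomial (Fin m) k) (FractionRing (MvPolynomial (Fin m) k)))
        (sumSwapAlgEquiv k (Fin m) (Fin r) p) := by
  induction p using MvPolynomial.induction_on with
  | C c => simp [toFracField]
  | add p q hp hq => simp [hp, hq]
  | mul_X p v hp => rw [map_mul, map_mul, map_mul, hp]; cases v <;> simp [toFracField]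

theorem specA_apply (k : Type*) [Field k] (m r : ℕ) (a : Fin m → k)
    (p : MvPolynomial (Fin m ⊕ Fin r) k) :
    specA k m r a p = map (eval a) (sumSwapAlgEquiv k (Fin m) (Fin r) p) := by
  induction p using MvPolynomial.induction_on with
  | C c => simp [specA]
  | add p q hp hq => simp [hp, hq]
  | mul_X p v hp => rw [map_mul, map_mul, map_mul, hp]; cases v <;> simp [specA]

theorem stmt11_general (k : Type*) [Field k] [Infinite k] (s m r : ℕ)
    (hs : 2 ≤ s)
    (P : Fin s → MvPolynomial (Fin m ⊕ Fin r) k)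
    (hP : ∀ i, P i ≠ 0) :
    List.TFAE
      [ (∀ D : MvPolynomial (Fin m ⊕ Fin r) k, (∀ i, D ∣ P i) →
          ∃ E : MvPolynomial (Fin m) k, D = rename Sum.inl E),
        (∀ D : MvPolynomial (Fin r) (FractionRing (MvPolynomial (Fin m) k)),
          (∀ i, D ∣ toFracField k m r (P i)) → D.totalDegree = 0),
        (∃ G : MvPolynomial (Fin m) k, G ≠ 0 ∧
          ∀ a : Fin m → k, eval a G ≠ 0 →
            ∀ D : MvPolynomial (Fin r) k,
              (∀ i, D ∣ specA k m r a (P i)) → D.totalDegree = 0),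
        (∃ Y : Set (Fin m → k),
          (∀ G : MvPolynomial (Fin m) k, G ≠ 0 → ∃ a ∈ Y, eval a G ≠ 0) ∧
          ∀ a ∈ Y, ∀ D : MvPolynomial (Fin r) k,
            (∀ i, D ∣ specA k m r a (P i)) → D.totalDegree = 0) ] := by
  set Q := fun i => sumSwapAlgEquiv k (Fin m) (Fin r) (P i)
  have hQ : ∃ i, Q i ≠ 0 := ⟨⟨0, by omega⟩, by simpa [Q] using hP _⟩
  simp only [toFracField_apply, specA_apply, forall_dvd_eq_rename_inl_iff]
  tfae_have 1 ↔ 2 := (hasOnlyConstantCommonDivisors_map_algebraMap_iff Q).symm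
  tfae_have 1 → 3 := fun h =>
    (h.exists_ne_zero_forall_map hQ k).imp fun _ ⟨hG, hcop⟩ => ⟨hG, fun a => hcop (eval a)⟩
  tfae_have 3 → 4 := by
    rintro ⟨G, hG, hcop⟩
    refine ⟨{a | eval a G ≠ 0}, fun G' hG' => ?_, hcop⟩
    obtain ⟨a, ha⟩ := exists_eval_ne_zero (mul_ne_zero hG hG')
    rw [map_mul] at ha
    exact ⟨a, left_ne_zero_of_mul ha, right_ne_zero_of_mul ha⟩
  tfae_have 4 → 1 := fun ⟨Y, hY, hcop⟩ =>
    .of_forall_map (fun a : Y => eval a.1)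
      (fun G hG => (hY G hG).elim fun a ⟨ha, hGa⟩ => ⟨⟨a, ha⟩, hGa⟩) fun a => hcop a a.2
  tfae_finish

/-- Bertini–Noether type statement for coprimality: for nonzero polynomials
`P_1,…,P_s ∈ k[a,x]` over an infinite field `k`, the four conditions
(i) every common divisor in `k[a,x]` lies in `k[a]`,
(ii) the `P_i` are coprime in `k(a)[x]`,
(iii) coprimality of the specializations off a proper Zariski-closed subset,
(iv) coprimality of the specializations on a Zariski-dense subset,
are equivalent. -/
theorem stmt11 (k : Type*) [Field k] [Infinite k] (s m r : ℕ)
    (hs : 2 ≤ s) (hm : 1 ≤ m) (hr : 1 ≤ r)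
    (P : Fin s → MvPolynomial (Fin m ⊕ Fin r) k)
    (hP : ∀ i, P i ≠ 0) :
    List.TFAE
      [ (∀ D : MvPolynomial (Fin m ⊕ Fin r) k, (∀ i, D ∣ P i) →
          ∃ E : MvPolynomial (Fin m) k, D = rename Sum.inl E),
        (∀ D : MvPolynomial (Fin r) (FractionRing (MvPolynomial (Fin m) k)),
          (∀ i, D ∣ toFracField k m r (P i)) → D.totalDegree = 0),
        (∃ G : MvPolynomial (Fin m) k, G ≠ 0 ∧
          ∀ a : Fin m → k, eval a G ≠ 0 →
            ∀ D : MvPolynomial (Fin r) k,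
              (∀ i, D ∣ specA k m r a (P i)) → D.totalDegree = 0),
        (∃ Y : Set (Fin m → k),
          (∀ G : MvPolynomial (Fin m) k, G ≠ 0 → ∃ a ∈ Y, eval a G ≠ 0) ∧
          ∀ a ∈ Y, ∀ D : MvPolynomial (Fin r) k,
            (∀ i, D ∣ specA k m r a (P i)) → D.totalDegree = 0) ] :=
  stmt11_general k s m r hs P hP
end

section
/- Let Z be a unique factorization domain with fraction field Q, and let P_1,…,P_s ∈ Z[x_1,…,x_r] (s ≥ 2, r ≥ 1) be nonzero polynomials that are coprime in Q[x]. Then there exists a nonzero element R_0 ∈ Z with the property: for every prime ideal 𝔭 ⊂ Z with R_0 ∉ 𝔭, the reductions of P_1,…,P_s modulo 𝔭, viewed in k^𝔭[x] where k^𝔭 is the fraction field of the integral domain Z/𝔭, are coprime in k^𝔭[x]. -/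
/-!
Fix a variable `x_j` and view `Z[x]` as `A[x_j]` with `A = Z[x_k : k ≠ j]`, again a UFD. By Gauss's
lemma a common divisor of the `P_i` of positive degree in `Frac(A)[x_j]` would give a common divisor
in `Z[x]` of positive `x_j`-degree, contradicting coprimality over `Q`. As `Frac(A)[x_j]` is a PID,
the `P_i` generate the unit ideal there, and clearing denominators yields a nonzero `H_j` in the
ideal `(P_1, …, P_s) ⊆ Z[x]` not involving `x_j`. Let `R₀` be the product of one nonzero coefficient
of each `H_j`. Modulo a prime `𝔭 ∌ R₀` every `H_j` stays nonzero and is divisible by any common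
divisor `D` of the reduced `P_i`, so `D` has degree `0` in every variable.
-/

open MvPolynomial

open scoped nonZeroDivisors

namespace Polynomial

theorem exists_smul_eq_map_of_mem_map {R S : Type*} [CommRing R] [CommRing S] [Algebra R S]
    (M : Submonoid R) [IsLocalization M S] {I : Ideal R[X]} {x : S[X]}
    (hx : x ∈ I.map (mapRingHom (algebraMap R S))) :
    ∃ b ∈ M, ∃ y ∈ I, y.map (algebraMap R S) = b • x := by
  induction hx using Submodule.span_induction with
  | mem x hx =>
    obtain ⟨y, hy, rfl⟩ := hx
    exact ⟨1, M.one_mem, y, hy, by simp⟩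
  | zero => exact ⟨1, M.one_mem, 0, I.zero_mem, by simp⟩
  | add x₁ x₂ _ _ h₁ h₂ =>
    obtain ⟨b₁, hb₁, y₁, hy₁, h₁⟩ := h₁
    obtain ⟨b₂, hb₂, y₂, hy₂, h₂⟩ := h₂
    refine ⟨b₁ * b₂, M.mul_mem hb₁ hb₂, b₂ • y₁ + b₁ • y₂,
      I.add_mem (Submodule.smul_of_tower_mem _ _ hy₁) (Submodule.smul_of_tower_mem _ _ hy₂), ?_⟩
    rw [Polynomial.map_add, Polynomial.map_smul, Polynomial.map_smul, h₁, h₂, smul_add,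
      algebraMap_smul, algebraMap_smul, smul_smul, smul_smul, mul_comm b₂]
  | smul z x _ h =>
    obtain ⟨b, hb, y, hy, h⟩ := h
    obtain ⟨b', hb', hz⟩ := IsLocalization.integerNormalization_spec M z
    refine ⟨b' * b, M.mul_mem hb' hb, IsLocalization.integerNormalization M z * y,
      I.mul_mem_left _ hy, ?_⟩
    rw [Polynomial.map_mul, hz, h, smul_eq_mul, smul_mul_smul_comm]

section GCDDomain

variable {A : Type*} [CommRing A] [IsDomain A] [IsGCDMonoid A] {ι : Type*}

theorem natDegree_eq_zero_of_forall_dvd_map {K : Type*} [Field K] [Algebra A K]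
    [IsFractionRing A K] {p : ι → A[X]}
    (hp : ∀ d : A[X], (∀ i, d ∣ p i) → d.natDegree = 0) {g : K[X]}
    (hg : ∀ i, g ∣ (p i).map (algebraMap A K)) : g.natDegree = 0 := by
  let : NormalizedGCDMonoid A := Nonempty.some inferInstance
  obtain ⟨b, hb, hgb⟩ := IsLocalization.integerNormalization_spec A⁰ g
  set d := IsLocalization.integerNormalization A⁰ g
  have hb : algebraMap A K b ≠ 0 :=
    (map_ne_zero_iff _ (IsFractionRing.injective A K)).mpr (nonZeroDivisors.ne_zero hb)
  have hbg : b • g = C (algebraMap A K b) * g := by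
    rw [Algebra.smul_def, Polynomial.algebraMap_apply]
  have hd : ∀ i, d.primPart ∣ p i := fun i =>
    d.isPrimitive_primPart.dvd_of_fraction_map_dvd_fraction_map <|
      (Polynomial.map_dvd _ d.primPart_dvd).trans <| by
        rw [hgb, hbg]
        exact (isUnit_C.mpr hb.isUnit).mul_left_dvd.mpr (hg i)
  calc g.natDegree = (b • g).natDegree := by rw [hbg, natDegree_C_mul hb]
    _ = d.natDegree := by rw [← hgb, natDegree_map_eq_of_injective (IsFractionRing.injective A K)]
    _ = d.primPart.natDegree := d.natDegree_primPart.symm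
    _ = 0 := hp _ hd

theorem span_map_eq_top (K : Type*) [Field K] [Algebra A K] [IsFractionRing A K]
    {p : ι → A[X]} (hp : ∀ d : A[X], (∀ i, d ∣ p i) → d.natDegree = 0) :
    Ideal.span (Set.range fun i => (p i).map (algebraMap A K)) = ⊤ := by
  obtain ⟨g, hg⟩ :=
    IsPrincipalIdealRing.principal (Ideal.span (Set.range fun i => (p i).map (algebraMap A K)))
  have hgp : ∀ i, g ∣ (p i).map (algebraMap A K) := fun i =>
    Ideal.mem_span_singleton.mp <| by
      rw [← Ideal.submodule_span_eq, ← hg]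
      exact Ideal.subset_span ⟨i, rfl⟩
  obtain ⟨c, rfl⟩ := natDegree_eq_zero.mp (natDegree_eq_zero_of_forall_dvd_map hp hgp)
  have hc : c ≠ 0 := by
    rintro rfl
    have hX : ∀ i, (X : A[X]) ∣ p i := fun i => by
      have hpi := hgp i
      rw [C_0, zero_dvd_iff, Polynomial.map_eq_zero_iff (IsFractionRing.injective A K)] at hpi
      simp [hpi]
    simpa using hp X hX
  rw [hg, Ideal.submodule_span_eq]
  exact Ideal.span_singleton_eq_top.mpr (isUnit_C.mpr hc.isUnit)

theorem exists_C_mem_span_of_forall_dvd {p : ι → A[X]}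
    (hp : ∀ d : A[X], (∀ i, d ∣ p i) → d.natDegree = 0) :
    ∃ c : A, c ≠ 0 ∧ C c ∈ Ideal.span (Set.range p) := by
  let f := algebraMap A (FractionRing A)
  have hone : 1 ∈ (Ideal.span (Set.range p)).map (mapRingHom f) := by
    rw [Ideal.map_span, ← Set.range_comp]
    simp [f, Function.comp_def, span_map_eq_top (FractionRing A) hp]
  obtain ⟨b, hb, y, hy, hyb⟩ := exists_smul_eq_map_of_mem_map A⁰ hone
  have hyC : y = C b := Polynomial.map_injective f (IsFractionRing.injective A _) <| by
    rw [hyb, map_C, Algebra.smul_def, mul_one, Polynomial.algebraMap_apply]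
  exact ⟨b, nonZeroDivisors.ne_zero hb, hyC ▸ hy⟩

end GCDDomain

end Polynomial

theorem Ideal.dvd_of_mem_span_range {R S ι : Type*} [CommSemiring R] [CommSemiring S]
    (f : R →+* S) {P : ι → R} {D : S} (hD : ∀ i, D ∣ f (P i)) {x : R}
    (hx : x ∈ Ideal.span (Set.range P)) : D ∣ f x := by
  rw [← Ideal.mem_span_singleton]
  refine Ideal.map_le_iff_le_comap.mpr ?_ (Ideal.mem_map_of_mem f hx)
  rw [Ideal.span_le]
  rintro _ ⟨i, rfl⟩
  exact Ideal.mem_span_singleton.mpr (hD i)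

namespace MvPolynomial

variable {σ R : Type*} [CommRing R]

theorem degreeOf_map_le {S : Type*} [CommRing S] (f : R →+* S) (j : σ) (p : MvPolynomial σ R) :
    degreeOf j (p.map f) ≤ degreeOf j p := by
  classical
  simpa only [degreeOf_def] using Multiset.count_le_of_le j degrees_map_le

theorem degreeOf_map_of_injective {S : Type*} [CommRing S] {f : R →+* S}
    (hf : Function.Injective f) (j : σ) (p : MvPolynomial σ R) :
    degreeOf j (p.map f) = degreeOf j p := by
  classical
  simp only [degreeOf_def, degrees_map_of_injective p hf]

theorem degreeOf_le_of_dvd [IsDomain R] {p q : MvPolynomial σ R} (h : p ∣ q) (hq : q ≠ 0)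
    (j : σ) : degreeOf j p ≤ degreeOf j q := by
  obtain ⟨r, rfl⟩ := h
  rw [degreeOf_mul_eq (left_ne_zero_of_mul hq) (right_ne_zero_of_mul hq)]
  exact Nat.le_add_right _ _

theorem totalDegree_eq_zero_of_forall_degreeOf_eq_zero {p : MvPolynomial σ R}
    (h : ∀ j, degreeOf j p = 0) : p.totalDegree = 0 :=
  (totalDegree_eq_zero_iff σ p).mpr fun _ hm j => Nat.le_zero.mp (h j ▸ monomial_le_degreeOf j hm)

theorem exists_mem_span_ne_zero_degreeOf_eq_zero {Q ι : Type*} [IsDomain R]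
    [UniqueFactorizationMonoid R] [Field Q] [Algebra R Q] [IsFractionRing R Q]
    {P : ι → MvPolynomial σ R}
    (hcop : ∀ D : MvPolynomial σ Q, (∀ i, D ∣ (P i).map (algebraMap R Q)) → D.totalDegree = 0)
    (j : σ) : ∃ H ∈ Ideal.span (Set.range P), H ≠ 0 ∧ degreeOf j H = 0 := by
  classical
  let e : MvPolynomial σ R ≃ₐ[R] Polynomial (MvPolynomial {k // k ≠ j} R) :=
    (renameEquiv R (Equiv.optionSubtypeNe j).symm).trans (optionEquivLeft R _)
  have he : ∀ p, (e p).natDegree = degreeOf j p := fun p => (degreeOf_eq_natDegree j p).symm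
  have hdvd : ∀ d, (∀ i, d ∣ e (P i)) → d.natDegree = 0 := by
    intro d hd
    have hD : ∀ i, (e.symm d).map (algebraMap R Q) ∣ (P i).map (algebraMap R Q) := fun i =>
      map_dvd _ (by simpa using map_dvd e.symm (hd i))
    rw [← e.apply_symm_apply d, he, ← degreeOf_map_of_injective (IsFractionRing.injective R Q)]
    exact Nat.le_zero.mp (hcop _ hD ▸ degreeOf_le_totalDegree _ j)
  obtain ⟨c, hc, hcP⟩ := Polynomial.exists_C_mem_span_of_forall_dvd hdvd
  refine ⟨e.symm (Polynomial.C c), ?_, by simpa using hc,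
    by rw [← he, e.apply_symm_apply, Polynomial.natDegree_C]⟩
  simpa [Ideal.map_span, ← Set.range_comp, Function.comp_def] using
    Ideal.mem_map_of_mem e.symm hcP

theorem exists_ne_zero_forall_map_ne_zero [IsDomain R] {ι : Type*} [Fintype ι]
    {H : ι → MvPolynomial σ R} (hH : ∀ j, H j ≠ 0) :
    ∃ R₀ : R, R₀ ≠ 0 ∧
      ∀ {S : Type*} [CommRing S] (φ : R →+* S), φ R₀ ≠ 0 → ∀ j, (H j).map φ ≠ 0 := by
  choose m hm using fun j => ne_zero_iff.mp (hH j)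
  refine ⟨∏ j, coeff (m j) (H j), Finset.prod_ne_zero_iff.mpr fun j _ => hm j, ?_⟩
  intro S _ φ hφ j hj
  apply hφ
  obtain ⟨t, ht⟩ := Finset.dvd_prod_of_mem (fun j => coeff (m j) (H j)) (Finset.mem_univ j)
  rw [ht, map_mul, ← coeff_map, hj, coeff_zero, zero_mul]

end MvPolynomial

theorem stmt13_general (Z Q : Type*) [CommRing Z] [IsDomain Z] [UniqueFactorizationMonoid Z]
    [Field Q] [Algebra Z Q] [IsFractionRing Z Q]
    (s r : ℕ)
    (P : Fin s → MvPolynomial (Fin r) Z)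
    (hcop : ∀ D : MvPolynomial (Fin r) Q,
      (∀ i, D ∣ (P i).map (algebraMap Z Q)) → D.totalDegree = 0) :
    ∃ R₀ : Z, R₀ ≠ 0 ∧
      ∀ (𝔭 : Ideal Z) [𝔭.IsPrime], R₀ ∉ 𝔭 →
        ∀ D : MvPolynomial (Fin r) (FractionRing (Z ⧸ 𝔭)),
          (∀ i, D ∣ (P i).map
            ((algebraMap (Z ⧸ 𝔭) (FractionRing (Z ⧸ 𝔭))).comp (Ideal.Quotient.mk 𝔭))) →
          D.totalDegree = 0 := by
  choose H hHP hH0 hHdeg using exists_mem_span_ne_zero_degreeOf_eq_zero hcop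
  obtain ⟨R₀, hR₀, hmap⟩ := exists_ne_zero_forall_map_ne_zero hH0
  refine ⟨R₀, hR₀, fun 𝔭 _ hR₀𝔭 D hD => ?_⟩
  set φ := (algebraMap (Z ⧸ 𝔭) (FractionRing (Z ⧸ 𝔭))).comp (Ideal.Quotient.mk 𝔭)
  have hφ : φ R₀ ≠ 0 := by
    simpa [φ, IsFractionRing.to_map_eq_zero_iff, Ideal.Quotient.eq_zero_iff_mem] using hR₀𝔭
  refine totalDegree_eq_zero_of_forall_degreeOf_eq_zero fun j => Nat.le_zero.mp ?_
  calc degreeOf j D ≤ degreeOf j ((H j).map φ) :=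
        degreeOf_le_of_dvd (Ideal.dvd_of_mem_span_range (map φ) hD (hHP j)) (hmap φ hφ j) j
    _ ≤ degreeOf j (H j) := degreeOf_map_le φ j (H j)
    _ = 0 := hHdeg j

/-- Over a UFD `Z` with fraction field `Q`, if `P_1,…,P_s ∈ Z[x]` are nonzero
and coprime in `Q[x]`, then there is a nonzero `R₀ ∈ Z` such that for every
prime ideal `𝔭` not containing `R₀`, the reductions of the `P_i` modulo `𝔭`
are coprime in `k^𝔭[x]`, where `k^𝔭 = Frac(Z/𝔭)`. -/
theorem stmt13 (Z Q : Type*) [CommRing Z] [IsDomain Z] [UniqueFactorizationMonoid Z]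
    [Field Q] [Algebra Z Q] [IsFractionRing Z Q]
    (s r : ℕ) (hs : 2 ≤ s) (hr : 1 ≤ r)
    (P : Fin s → MvPolynomial (Fin r) Z) (hP : ∀ i, P i ≠ 0)
    (hcop : ∀ D : MvPolynomial (Fin r) Q,
      (∀ i, D ∣ (P i).map (algebraMap Z Q)) → D.totalDegree = 0) :
    ∃ R₀ : Z, R₀ ≠ 0 ∧
      ∀ (𝔭 : Ideal Z) [𝔭.IsPrime], R₀ ∉ 𝔭 →
        ∀ D : MvPolynomial (Fin r) (FractionRing (Z ⧸ 𝔭)),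
          (∀ i, D ∣ (P i).map
            ((algebraMap (Z ⧸ 𝔭) (FractionRing (Z ⧸ 𝔭))).comp (Ideal.Quotient.mk 𝔭))) →
          D.totalDegree = 0 :=
  stmt13_general Z Q s r P hcop
end

section
/- Let P_1,…,P_s ∈ ℤ[x_1,…,x_r] (s ≥ 2, r ≥ 1) be nonzero coprime polynomials. If d_{n_0} = 1 for some n_0 ∈ ℤ^r, then the set {n ∈ ℤ^r : d_n = 1} is Zariski-dense in ℤ^r: for every nonzero polynomial Q ∈ ℚ[x_1,…,x_r] there exists n ∈ ℤ^r with d_n = 1 and Q(n) ≠ 0. -/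
/-!
Choose `k₀` with `P k₀ (n₀) ≠ 0`. Every prime factor of `A = P k₀` fails to divide some `Pᵢ`, so
for all but finitely many integers `u` the polynomials `A` and `B = ∑ uⁱ Pᵢ` are coprime over `ℚ`.
Coprimality survives restriction to the hyperplane `x₀ - p₀ = c (x₁ - p₁)` through a point `p`
for all but finitely many slopes `c ∈ ℤ`: a Bézout identity `U A + V B = m` in the first variable
confines the bad slopes to those for which a prime factor of `m` divides both restrictions.
Iterating, `A` and `B` stay coprime on some integral line `n₀ + t c` on which `Q` does not vanish
identically. Clearing denominators in a Bézout identity on that line, every common divisor of the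
values `Pᵢ(n₀ + t c)` divides a fixed integer `m ≠ 0`; for `t ∈ m ℤ` it then also divides every
`Pᵢ(n₀)`, hence is `1`, and all but finitely many such `t` avoid the zeros of `Q`.
-/

open MvPolynomial
open scoped nonZeroDivisors

open UniqueFactorizationMonoid in
theorem exists_mem_factors_dvd_of_not_isRelPrime {R : Type*} [CommMonoidWithZero R]
    [UniqueFactorizationMonoid R] {x y m : R} (hm : m ≠ 0) (hxy : ¬IsRelPrime x y)
    (h : ∀ d, d ∣ x → d ∣ y → d ∣ m) : ∃ q ∈ factors m, q ∣ x ∧ q ∣ y := by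
  by_contra! hq
  refine hxy (WfDvdMonoid.isRelPrime_of_no_irreducible_factors ?_ fun z hz hzx hzy => ?_)
  · rintro ⟨rfl, rfl⟩
    exact hm (zero_dvd_iff.1 (h 0 dvd_rfl dvd_rfl))
  · obtain ⟨q, hq', hzq⟩ := exists_mem_factors_of_dvd hm hz (h z hzx hzy)
    exact hq q hq' (hzq.symm.dvd.trans hzx) (hzq.symm.dvd.trans hzy)

namespace Polynomial

open IsLocalization in
theorem isCoprime_map_of_isRelPrime {R K : Type*} [CommRing R] [IsDomain R]
    [NormalizedGCDMonoid R] [Field K] [Algebra R K] [IsFractionRing R K] {f g : R[X]}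
    (h : IsRelPrime f g) : IsCoprime (f.map (algebraMap R K)) (g.map (algebraMap R K)) := by
  have hinj := IsFractionRing.injective R K
  rw [← isRelPrime_iff_isCoprime]
  intro d hdf hdg
  have hd : d ≠ 0 := by
    rintro rfl
    rw [zero_dvd_iff, Polynomial.map_eq_zero_iff hinj] at hdf hdg
    exact not_isRelPrime_zero_zero (hdf ▸ hdg ▸ h)
  set d' := (integerNormalization R⁰ d).primPart
  have hd'd : d'.map (algebraMap R K) ∣ d := by
    obtain ⟨b, hb, hbd⟩ := integerNormalization_spec R⁰ d
    have hb0 : algebraMap R K b ≠ 0 := (map_ne_zero_iff _ hinj).2 (nonZeroDivisors.ne_zero hb)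
    refine (map_dvd _ (primPart_dvd _)).trans ⟨C (algebraMap R K b)⁻¹, ?_⟩
    rw [hbd, Algebra.smul_def, algebraMap_apply, mul_comm, ← mul_assoc, ← C_mul,
      inv_mul_cancel₀ hb0, C_1, one_mul]
  have hprim := isPrimitive_primPart (integerNormalization R⁰ d)
  exact isUnit_or_eq_zero_of_isUnit_integerNormalization_primPart hd
    (h (hprim.dvd_of_fraction_map_dvd_fraction_map (hd'd.trans hdf))
      (hprim.dvd_of_fraction_map_dvd_fraction_map (hd'd.trans hdg)))

open IsLocalization in
theorem exists_mul_add_mul_eq_C_of_isCoprime_map {R K : Type*} [CommRing R] [IsDomain R]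
    [Field K] [Algebra R K] [IsFractionRing R K] {f g : R[X]}
    (h : IsCoprime (f.map (algebraMap R K)) (g.map (algebraMap R K))) :
    ∃ m ≠ 0, ∃ U V : R[X], U * f + V * g = C m := by
  have hinj := IsFractionRing.injective R K
  obtain ⟨U, V, hUV⟩ := h
  obtain ⟨a, ha, hU⟩ := integerNormalization_spec R⁰ U
  obtain ⟨b, hb, hV⟩ := integerNormalization_spec R⁰ V
  refine ⟨a * b, mul_ne_zero (nonZeroDivisors.ne_zero ha) (nonZeroDivisors.ne_zero hb),
    C b * integerNormalization R⁰ U, C a * integerNormalization R⁰ V, map_injective _ hinj ?_⟩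
  simp only [Polynomial.map_add, Polynomial.map_mul, map_C, hU, hV, Algebra.smul_def,
    algebraMap_apply, map_mul]
  linear_combination (C (algebraMap R K a) * C (algebraMap R K b)) * hUV

theorem exists_mul_add_mul_eq_C_of_isRelPrime {R : Type*} [CommRing R] [IsDomain R]
    [UniqueFactorizationMonoid R] {f g : R[X]} (h : IsRelPrime f g) :
    ∃ m ≠ 0, ∃ U V : R[X], U * f + V * g = C m := by
  classical
  let := UniqueFactorizationMonoid.strongNormalizationMonoid (α := R)
  let := UniqueFactorizationMonoid.toStrongNormalizedGCDMonoid R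
  exact exists_mul_add_mul_eq_C_of_isCoprime_map
    (isCoprime_map_of_isRelPrime (K := FractionRing R) h)

theorem finite_setOf_eval_add_mul_eq_zero {R : Type*} [CommRing R] [IsDomain R] [CharZero R]
    {f : R[X]} (hf : f ≠ 0) (a : R) {b : R} (hb : b ≠ 0) :
    {c : ℤ | f.eval (a + c * b) = 0}.Finite := by
  refine (finite_setOfPred_isRoot hf).preimage fun c _ c' _ h => ?_
  exact Int.cast_injective (mul_right_cancel₀ hb (add_left_cancel h))

theorem finite_setOf_dvd_eval_add_mul {R : Type*} [CommRing R] [Algebra ℚ R] {q : R}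
    (hq : Prime q) {f : R[X]} (hf : ¬C q ∣ f) (a : R) {b : R} (hb : ¬q ∣ b) :
    {c : ℤ | q ∣ f.eval (a + c * b)}.Finite := by
  set φ := Ideal.Quotient.mk (Ideal.span {q})
  have hφ : ∀ x, φ x = 0 ↔ q ∣ x := Ideal.Quotient.eq_zero_iff_dvd q
  have := (Ideal.span_singleton_prime hq.ne_zero).2 hq
  have := algebraRat.charZero (R ⧸ Ideal.span {q})
  have hfφ : f.map φ ≠ 0 := fun h0 => hf <| (C_dvd_iff_dvd_coeff q f).2 fun i =>
    (hφ _).1 (by rw [← coeff_map, h0, coeff_zero])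
  refine (finite_setOf_eval_add_mul_eq_zero hfφ (φ a) (mt (hφ b).1 hb)).subset fun c hc => ?_
  rw [Set.mem_ofPred_eq, ← map_intCast φ, ← map_mul, ← map_add, eval_map_apply, hφ]
  exact hc

theorem finite_setOf_dvd_eval_add_mul_of_isRelPrime {R : Type*} [CommRing R] [IsDomain R]
    [Algebra ℚ R] {f g : R[X]} (hfg : IsRelPrime f g) {a b : R} (hb : Prime b)
    (hfa : ¬b ∣ f.eval a) {q : R} (hq : Prime q) :
    {c : ℤ | q ∣ f.eval (a + c * b) ∧ q ∣ g.eval (a + c * b)}.Finite := by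
  by_cases hqb : q ∣ b
  · -- then `q` is associated to `b`, and `f (a + c * b) ≡ f a` modulo `b`
    have hbq : b ∣ q := ((hq.dvd_prime_iff_associated hb).1 hqb).symm.dvd
    refine Set.finite_empty.subset fun c ⟨hcf, _⟩ => hfa ?_
    have hsub : b ∣ f.eval (a + c * b) - f.eval a :=
      (dvd_mul_left b c).trans (by simpa using sub_dvd_eval_sub (a + c * b) a f)
    exact (dvd_sub_right (hbq.trans hcf)).1 hsub
  · have hfg' : ¬(C q ∣ f ∧ C q ∣ g) := fun ⟨hf, hg⟩ =>
      hq.not_isUnit (isUnit_C.1 (hfg hf hg))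
    rcases not_and_or.1 hfg' with hf | hg
    · exact (finite_setOf_dvd_eval_add_mul hq hf a hqb).subset fun c hc => hc.1
    · exact (finite_setOf_dvd_eval_add_mul hq hg a hqb).subset fun c hc => hc.2

section UniqueFactorization

open UniqueFactorizationMonoid

variable {R : Type*} [CommRing R] [UniqueFactorizationMonoid R] [Algebra ℚ R]

theorem finite_setOf_not_isRelPrime_eval_add_mul [IsDomain R] {f g : R[X]}
    (hfg : IsRelPrime f g) {a b : R} (hb : Prime b) (hfa : ¬b ∣ f.eval a) :
    {c : ℤ | ¬IsRelPrime (f.eval (a + c * b)) (g.eval (a + c * b))}.Finite := by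
  classical
  obtain ⟨m, hm, U, V, hUV⟩ := exists_mul_add_mul_eq_C_of_isRelPrime hfg
  refine ((factors m).toFinset.finite_toSet.biUnion fun q hq =>
    finite_setOf_dvd_eval_add_mul_of_isRelPrime hfg hb hfa
      (prime_of_factor q (Multiset.mem_toFinset.1 hq))).subset fun c hc => ?_
  obtain ⟨q, hq, hqf, hqg⟩ := exists_mem_factors_dvd_of_not_isRelPrime hm hc fun d hdf hdg => by
    have hm' := congrArg (eval (a + c * b)) hUV
    rw [eval_add, eval_mul, eval_mul, eval_C] at hm'
    exact hm' ▸ dvd_add (hdf.mul_left _) (hdg.mul_left _)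
  exact Set.mem_biUnion (Multiset.mem_toFinset.2 hq) ⟨hqf, hqg⟩

theorem exists_isRelPrime_eval_intCast {A : R} (hA : A ≠ 0) {f : R[X]}
    (hf : ∀ q, Prime q → q ∣ A → ¬C q ∣ f) : ∃ u : ℤ, IsRelPrime A (f.eval (u : R)) := by
  classical
  obtain ⟨u, hu⟩ := ((factors A).toFinset.finite_toSet.biUnion fun q hq =>
    have hq := Multiset.mem_toFinset.1 hq
    finite_setOf_dvd_eval_add_mul (prime_of_factor q hq) (hf q (prime_of_factor q hq)
      (dvd_of_mem_factors hq)) 0 (prime_of_factor q hq).not_dvd_one).exists_notMem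
  refine ⟨u, by_contra fun h => ?_⟩
  obtain ⟨q, hq, -, hqf⟩ := exists_mem_factors_dvd_of_not_isRelPrime hA h fun d hd _ => hd
  exact hu (Set.mem_biUnion (Multiset.mem_toFinset.2 hq) (by simpa using hqf))

theorem exists_isRelPrime_sum_pow_mul {s : ℕ} (P : Fin s → R)
    (hP : ∀ q, Prime q → ∃ i, ¬q ∣ P i) {A : R} (hA : A ≠ 0) :
    ∃ u : ℤ, IsRelPrime A (∑ i : Fin s, (u : R) ^ (i : ℕ) * P i) := by
  obtain ⟨u, hu⟩ := exists_isRelPrime_eval_intCast hA (f := ∑ i : Fin s, monomial i (P i))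
    fun q hq _ hqf => by
      obtain ⟨i, hi⟩ := hP q hq
      exact hi (by simpa [finsetSum_coeff, coeff_monomial, Fin.val_inj] using
        (C_dvd_iff_dvd_coeff q _).1 hqf i)
  exact ⟨u, by simpa [eval_finsetSum, mul_comm] using hu⟩

end UniqueFactorization

end Polynomial

namespace MvPolynomial

section Line

variable {σ R : Type*} [CommRing R]

noncomputable def line (p v : σ → R) : MvPolynomial σ R →ₐ[R] Polynomial R :=
  aeval fun j => Polynomial.C (p j) + Polynomial.C (v j) * Polynomial.X

theorem eval_line (p v : σ → R) (F : MvPolynomial σ R) (t : R) :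
    (line p v F).eval t = eval (fun j => p j + t * v j) F := by
  have : (Polynomial.evalRingHom t).comp (line p v).toRingHom = eval fun j => p j + t * v j :=
    ringHom_ext (fun a => by simp [line]) fun j => by simp [line]; ring
  exact RingHom.congr_fun this F

theorem map_line {S : Type*} [CommRing S] (φ : R →+* S) (p v : σ → R)
    (F : MvPolynomial σ R) : (line p v F).map φ = line (φ ∘ p) (φ ∘ v) (F.map φ) := by
  induction F using MvPolynomial.induction_on <;> simp_all [line]

theorem dvd_eval_add_mul_sub_eval (n₀ c : σ → R) (t : R) (F : MvPolynomial σ R) :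
    t ∣ eval (fun j => n₀ j + t * c j) F - eval n₀ F := by
  simpa [eval_line] using Polynomial.sub_dvd_eval_sub t 0 (line n₀ c F)

theorem gcd_eval_add_mul_eq_one {ι : Type*} [IsDomain R] [NormalizedGCDMonoid R]
    (s : Finset ι) (P : ι → MvPolynomial σ R) (n₀ c : σ → R)
    (h₁ : s.gcd (fun i => eval n₀ (P i)) = 1) {m t : R} (hmt : m ∣ t)
    (hm : ∀ d, (∀ i ∈ s, d ∣ eval (fun j => n₀ j + t * c j) (P i)) → d ∣ m) :
    s.gcd (fun i => eval (fun j => n₀ j + t * c j) (P i)) = 1 := by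
  have hdm := hm _ fun i hi =>
    Finset.gcd_dvd (f := fun i => eval (fun j => n₀ j + t * c j) (P i)) hi
  have hd1 : s.gcd (fun i => eval (fun j => n₀ j + t * c j) (P i)) ∣ 1 :=
    h₁ ▸ Finset.dvd_gcd fun i hi => (dvd_sub_right (Finset.gcd_dvd hi)).1 <|
      (hdm.trans hmt).trans (dvd_eval_add_mul_sub_eval n₀ c t (P i))
  rw [← Finset.normalize_gcd, normalize_eq_one]
  exact isUnit_of_dvd_one hd1

theorem exists_dvd_of_isCoprime_line {K : Type*} [IsDomain R] [Field K] [Algebra R K]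
    [IsFractionRing R K] {A B : MvPolynomial σ R} {n₀ c : σ → R}
    (h : IsCoprime (line (algebraMap R K ∘ n₀) (algebraMap R K ∘ c) (A.map (algebraMap R K)))
      (line (algebraMap R K ∘ n₀) (algebraMap R K ∘ c) (B.map (algebraMap R K)))) :
    ∃ m ≠ 0, ∀ t d : R, d ∣ eval (fun j => n₀ j + t * c j) A →
      d ∣ eval (fun j => n₀ j + t * c j) B → d ∣ m := by
  rw [← map_line, ← map_line] at h
  obtain ⟨m, hm, U, V, hUV⟩ := Polynomial.exists_mul_add_mul_eq_C_of_isCoprime_map h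
  refine ⟨m, hm, fun t d hA hB => ?_⟩
  have hm' := congrArg (Polynomial.eval t) hUV
  simp only [Polynomial.eval_add, Polynomial.eval_mul, Polynomial.eval_C, eval_line] at hm'
  exact hm' ▸ dvd_add (hA.mul_left _) (hB.mul_left _)

noncomputable def lineEquiv (p : Fin 1 → R) : MvPolynomial (Fin 1) R ≃ₐ[R] Polynomial R :=
  AlgEquiv.ofAlgHom (line p 1) (Polynomial.aeval (X 0 - C (p 0)))
    (Polynomial.algHom_ext (by simp [line])) (algHom_ext fun i => by fin_cases i; simp [line])

end Line

theorem totalDegree_ne_zero_of_prime {σ K : Type*} [Field K] {q : MvPolynomial σ K}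
    (hq : Prime q) : q.totalDegree ≠ 0 := fun h => hq.not_isUnit <|
  isUnit_iff_totalDegree_of_isReduced.2 ⟨isUnit_iff_ne_zero.2 fun h0 => hq.ne_zero <| by
    rw [totalDegree_eq_zero_iff_eq_C.1 h, h0, map_zero], h⟩

theorem eval_map_intCast {σ : Type*} (n : σ → ℤ) (F : MvPolynomial σ ℤ) :
    eval (Int.cast ∘ n) (F.map (Int.castRingHom ℚ)) = eval n F := by
  induction F using MvPolynomial.induction_on <;> simp_all

variable {R : Type*} [CommRing R] {k : ℕ}

theorem prime_X_zero_sub_C [IsDomain R] (v : R) :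
    Prime (X 0 - C v : MvPolynomial (Fin (k + 1)) R) := by
  rw [← MulEquiv.prime_iff (finSuccEquiv R k)]
  simpa [finSuccEquiv_X_zero, finSuccEquiv_apply] using
    Polynomial.prime_X_sub_C (C v : MvPolynomial (Fin k) R)

/-- Restriction to the hyperplane `x 0 - p 0 = c * (x 1 - p 1)` through `p`, in the coordinates
`x 1, x 2, …`. -/
noncomputable def hyperplaneRestrict (p : Fin (k + 2) → R) (c : ℤ) :
    MvPolynomial (Fin (k + 2)) R →ₐ[R] MvPolynomial (Fin (k + 1)) R :=
  aeval (Fin.cons (C (p 0) + (c : MvPolynomial (Fin (k + 1)) R) * (X 0 - C (p 1))) X)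

theorem hyperplaneRestrict_eq_eval_finSuccEquiv (p : Fin (k + 2) → R) (c : ℤ)
    (F : MvPolynomial (Fin (k + 2)) R) :
    hyperplaneRestrict p c F = (finSuccEquiv R (k + 1) F).eval
      (C (p 0) + (c : MvPolynomial (Fin (k + 1)) R) * (X 0 - C (p 1))) := by
  have : (hyperplaneRestrict p c).toRingHom =
      (Polynomial.evalRingHom
        (C (p 0) + (c : MvPolynomial (Fin (k + 1)) R) * (X 0 - C (p 1)))).comp
        (finSuccEquiv R (k + 1)).toRingHom := by
    refine ringHom_ext (fun a => by simp [hyperplaneRestrict, finSuccEquiv_apply]) fun j => ?_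
    cases j using Fin.cases <;>
      simp [hyperplaneRestrict, finSuccEquiv_X_zero, finSuccEquiv_X_succ]
  exact RingHom.congr_fun this F

theorem eval_hyperplaneRestrict (p : Fin (k + 2) → R) (c : ℤ)
    (F : MvPolynomial (Fin (k + 2)) R) :
    eval (Fin.tail p) (hyperplaneRestrict p c F) = eval p F := by
  have : (eval (Fin.tail p)).comp (hyperplaneRestrict p c).toRingHom = eval p := by
    refine ringHom_ext (fun a => by simp [hyperplaneRestrict]) fun j => ?_
    cases j using Fin.cases <;> simp [hyperplaneRestrict, Fin.tail]
  exact RingHom.congr_fun this F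

theorem line_hyperplaneRestrict (p : Fin (k + 2) → R) (c : ℤ) (c' : Fin (k + 1) → ℤ)
    (F : MvPolynomial (Fin (k + 2)) R) :
    line (Fin.tail p) (Int.cast ∘ c') (hyperplaneRestrict p c F) =
      line p (Int.cast ∘ Fin.cons (c * c' 0) c') F := by
  have : (line (Fin.tail p) (Int.cast ∘ c')).comp (hyperplaneRestrict p c) =
      line p (Int.cast ∘ Fin.cons (c * c' 0) c') := by
    refine algHom_ext fun j => ?_
    cases j using Fin.cases
    · simp [hyperplaneRestrict, line, Fin.tail]
      ring
    · simp [hyperplaneRestrict, line, Fin.tail]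
  exact AlgHom.congr_fun this F

variable {K : Type*} [Field K] [CharZero K]

theorem exists_hyperplaneRestrict_isRelPrime {p : Fin (k + 2) → K}
    {A B Q : MvPolynomial (Fin (k + 2)) K} (hAB : IsRelPrime A B) (hA : eval p A ≠ 0)
    (hQ : Q ≠ 0) :
    ∃ c : ℤ, IsRelPrime (hyperplaneRestrict p c A) (hyperplaneRestrict p c B) ∧
      hyperplaneRestrict p c Q ≠ 0 := by
  set E := finSuccEquiv K (k + 1)
  have hb := prime_X_zero_sub_C (k := k) (p 1)
  have hfa : ¬(X 0 - C (p 1)) ∣ (E A).eval (C (p 0)) := by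
    rintro ⟨w, hw⟩
    have h0 : hyperplaneRestrict p 0 A = (X 0 - C (p 1)) * w := by
      rw [hyperplaneRestrict_eq_eval_finSuccEquiv, Int.cast_zero, zero_mul, add_zero, hw]
    apply hA
    rw [← eval_hyperplaneRestrict p 0, h0, map_mul]
    simp [Fin.tail]
  have hEQ : E Q ≠ 0 := (map_ne_zero_iff _ E.injective).2 hQ
  obtain ⟨c, hc⟩ := ((Polynomial.finite_setOf_not_isRelPrime_eval_add_mul
    (IsRelPrime.of_map E.symm (a := E A) (b := E B) (by simpa using hAB)) hb hfa).union
    (Polynomial.finite_setOf_eval_add_mul_eq_zero hEQ _ hb.ne_zero)).exists_notMem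
  simp only [hyperplaneRestrict_eq_eval_finSuccEquiv]
  exact ⟨c, by simpa [not_or] using hc⟩

theorem exists_line_isRelPrime : ∀ {k : ℕ} {A B Q : MvPolynomial (Fin (k + 1)) K}
    {p : Fin (k + 1) → K}, IsRelPrime A B → eval p A ≠ 0 → Q ≠ 0 →
    ∃ c : Fin (k + 1) → ℤ, IsRelPrime (line p (Int.cast ∘ c) A) (line p (Int.cast ∘ c) B) ∧
      line p (Int.cast ∘ c) Q ≠ 0
  | 0, A, B, Q, p, hAB, _, hQ => by
    have he (F : MvPolynomial (Fin 1) K) : line p (Int.cast ∘ 1) F = lineEquiv p F := by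
      simp [lineEquiv]
    refine ⟨1, ?_, ?_⟩ <;> simp only [he]
    · exact IsRelPrime.of_map (lineEquiv p).symm (by simpa using hAB)
    · exact (map_ne_zero_iff _ (lineEquiv p).injective).2 hQ
  | k + 1, A, B, Q, p, hAB, hA, hQ => by
    obtain ⟨c, hrel, hQ'⟩ := exists_hyperplaneRestrict_isRelPrime hAB hA hQ
    obtain ⟨c', hc'⟩ := exists_line_isRelPrime hrel (by rwa [eval_hyperplaneRestrict]) hQ'
    exact ⟨Fin.cons (c * c' 0) c', by simpa only [line_hyperplaneRestrict] using hc'⟩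

end MvPolynomial

theorem stmt16_general (s r : ℕ) (hr : 1 ≤ r)
    (P : Fin s → MvPolynomial (Fin r) ℤ)
    (hcop : ∀ D : MvPolynomial (Fin r) ℚ,
      (∀ i, D ∣ (P i).map (Int.castRingHom ℚ)) → D.totalDegree = 0)
    (n₀ : Fin r → ℤ) (h₁ : (Finset.univ.gcd fun i => eval n₀ (P i)) = 1) :
    ∀ Q : MvPolynomial (Fin r) ℚ, Q ≠ 0 →
      ∃ n : Fin r → ℤ, (Finset.univ.gcd fun i => eval n (P i)) = 1 ∧
        eval (fun j => (n j : ℚ)) Q ≠ 0 := by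
  intro Q hQ
  obtain ⟨k, rfl⟩ : ∃ k, r = k + 1 := ⟨r - 1, by omega⟩
  obtain ⟨k₀, hk₀⟩ : ∃ i, eval n₀ (P i) ≠ 0 := by
    by_contra! h
    simp [Finset.gcd_eq_zero_iff.2 fun i _ => h i] at h₁
  have hA : eval (Int.cast ∘ n₀) ((P k₀).map (Int.castRingHom ℚ)) ≠ 0 := by
    rw [eval_map_intCast]
    exact_mod_cast hk₀
  have hprime (q : MvPolynomial (Fin (k + 1)) ℚ) (hq : Prime q) :
      ∃ i, ¬q ∣ (P i).map (Int.castRingHom ℚ) := by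
    by_contra! h
    exact totalDegree_ne_zero_of_prime hq (hcop q h)
  obtain ⟨u, hu⟩ := Polynomial.exists_isRelPrime_sum_pow_mul _ hprime
    (A := (P k₀).map (Int.castRingHom ℚ)) fun h => hA (by rw [h, map_zero])
  obtain ⟨c, hAB, hQc⟩ := exists_line_isRelPrime
    (B := (∑ i : Fin s, (u : MvPolynomial (Fin (k + 1)) ℤ) ^ (i : ℕ) * P i).map
      (Int.castRingHom ℚ)) (by simpa using hu) hA hQ
  obtain ⟨m, hm, hdvd⟩ := exists_dvd_of_isCoprime_line (K := ℚ) (n₀ := n₀) (c := c) hAB.isCoprime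
  obtain ⟨j, hj⟩ :=
    (Polynomial.finite_setOf_eval_add_mul_eq_zero hQc 0 (Int.cast_ne_zero.2 hm)).exists_notMem
  refine ⟨fun i => n₀ i + j * m * c i, ?_, by simpa [eval_line] using hj⟩
  refine gcd_eval_add_mul_eq_one _ P n₀ c h₁ (dvd_mul_left m j) fun d hd =>
    hdvd _ d (hd k₀ (Finset.mem_univ _)) ?_
  simp only [map_sum, map_mul, map_pow, map_intCast]
  exact Finset.dvd_sum fun i _ => (hd i (Finset.mem_univ _)).mul_left _

/-- If nonzero coprime polynomials take coprime values at one point, they do so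
on a Zariski-dense set of integer points. -/
theorem stmt16 (s r : ℕ) (hs : 2 ≤ s) (hr : 1 ≤ r)
    (P : Fin s → MvPolynomial (Fin r) ℤ)
    (hP : ∀ i, P i ≠ 0)
    (hcop : ∀ D : MvPolynomial (Fin r) ℚ,
      (∀ i, D ∣ (P i).map (Int.castRingHom ℚ)) → D.totalDegree = 0)
    (n₀ : Fin r → ℤ) (h₁ : (Finset.univ.gcd fun i => eval n₀ (P i)) = 1) :
    ∀ Q : MvPolynomial (Fin r) ℚ, Q ≠ 0 →
      ∃ n : Fin r → ℤ, (Finset.univ.gcd fun i => eval n (P i)) = 1 ∧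
        eval (fun j => (n j : ℚ)) Q ≠ 0 :=
  stmt16_general s r hr P hcop n₀ h₁
end

section
/- Let P_1,…,P_s ∈ ℤ[x_1,…,x_r] (s ≥ 2, r ≥ 2) be nonzero coprime polynomials, and let n ∈ ℤ^r be such that P_i(n) ≠ 0 for at least one i ∈ {1,…,s}. Then the polynomials P_1(u·n + t·a),…,P_s(u·n + t·a), obtained by substituting x_j := u·n_j + t·a_j, are coprime in ℚ[a_1,…,a_r, u, t]. Consequently there is a nonzero polynomial G ∈ ℚ[a_1,…,a_r] such that for every a* ∈ ℤ^r with G(a*) ≠ 0, the polynomials P_1(u·n + t·a*),…,P_s(u·n + t·a*) are coprime in ℚ[u,t]. -/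
open MvPolynomial

/-!
For `c ≠ 0`, the substitution `a ↦ (a - u n) / c, t ↦ c` sends `P_i(u n + t a)` back to `P_i(a)`.
Hence the specialisation `t = c` of a common divisor `D` of the `P_i(u n + t a)` becomes, after
the invertible change of variables `a ↦ c a + u n`, a common divisor of the `P_i(a)` in
`ℚ[a, u]`, i.e. a constant. As this holds for infinitely many `c`, `D` is a polynomial in `t`
alone, and setting `a = 0, u = 1` makes it a divisor of the nonzero constant `P_i(n)`.

For the second part, Gauss's lemma over `ℚ[a, u]` and Bézout in `ℚ(a, u)[t]` give a nonzero
`g(a, u)` in the ideal generated by the `P_i(u n + t a)`, and symmetrically a nonzero `h(a, t)`.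
Let `G` be the product of a nonzero coefficient of `g` and one of `h`, viewed over `ℚ[a]`. If
`G(a*) ≠ 0`, a common divisor of the `P_i(u n + t a*)` divides the nonzero polynomials
`g(a*, u)` and `h(a*, t)`, which share no variable, so it is constant.
-/

/-- Substitution `x_j ↦ u·n_j + t·a_j`, from `ℤ[x_1,…,x_r]` to
`ℚ[a_1,…,a_r,u,t]` (the variable `Sum.inl j` is `a_j`, `Sum.inr 0` is `u`
and `Sum.inr 1` is `t`). -/
noncomputable def subLine (r : ℕ) (n : Fin r → ℤ) :
    MvPolynomial (Fin r) ℤ →+* MvPolynomial (Fin r ⊕ Fin 2) ℚ :=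
  eval₂Hom (Int.castRingHom (MvPolynomial (Fin r ⊕ Fin 2) ℚ))
    fun j => C ((n j : ℚ)) * X (Sum.inr 0) + X (Sum.inl j) * X (Sum.inr 1)

/-- Substitution `x_j ↦ u·n_j + t·a*_j` for fixed `n, a* ∈ ℤ^r`, from
`ℤ[x_1,…,x_r]` to `ℚ[u,t]` (the variable `0` is `u` and `1` is `t`). -/
noncomputable def subLineAt (r : ℕ) (n a : Fin r → ℤ) :
    MvPolynomial (Fin r) ℤ →+* MvPolynomial (Fin 2) ℚ :=
  eval₂Hom (Int.castRingHom (MvPolynomial (Fin 2) ℚ))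
    fun j => C ((n j : ℚ)) * X 0 + C ((a j : ℚ)) * X 1

namespace Polynomial

variable {R ι : Type*} [CommRing R] [IsDomain R] [IsGCDMonoid R]

theorem isUnit_of_forall_dvd_map {K : Type*} [Field K] [Algebra R K] [IsFractionRing R K]
    {Q : ι → R[X]} {d : K[X]} (hd : d ≠ 0) (hdvd : ∀ i, d ∣ (Q i).map (algebraMap R K))
    (hcop : ∀ D : R[X], (∀ i, D ∣ Q i) → D.natDegree = 0) : IsUnit d := by
  let _ : NormalizedGCDMonoid R := Classical.arbitrary _
  refine isUnit_or_eq_zero_of_isUnit_integerNormalization_primPart (R := R) hd ?_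
  set D : R[X] := (IsLocalization.integerNormalization (nonZeroDivisors R) d).primPart
  obtain ⟨b, hb, hbd⟩ := IsLocalization.integerNormalization_spec (nonZeroDivisors R) d
  have hprim : D.IsPrimitive := isPrimitive_primPart _
  have hb' : IsUnit (C (algebraMap R K b)) :=
    isUnit_C.mpr (IsUnit.mk0 _ (IsFractionRing.to_map_ne_zero_of_mem_nonZeroDivisors hb))
  have hDd : D.map (algebraMap R K) ∣ d :=
    calc D.map (algebraMap R K)
        ∣ (IsLocalization.integerNormalization (nonZeroDivisors R) d).map (algebraMap R K) :=
          Polynomial.map_dvd _ (primPart_dvd _)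
      _ = C (algebraMap R K b) * d := by rw [hbd, ← smul_eq_C_mul, algebraMap_smul]
      _ ∣ d := hb'.mul_left_dvd.mpr dvd_rfl
  have hD : D.natDegree = 0 := hcop D fun i =>
    hprim.dvd_of_fraction_map_dvd_fraction_map (hDd.trans (hdvd i))
  rw [eq_C_of_natDegree_eq_zero hD] at hprim ⊢
  exact isUnit_C.mpr (hprim _ dvd_rfl)

attribute [local instance] Polynomial.algebra in
theorem exists_C_mem_span_of_forall_dvd_natDegree_eq_zero (Q : ι → R[X]) {i₀ : ι} (hQ : Q i₀ ≠ 0)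
    (hcop : ∀ D : R[X], (∀ i, D ∣ Q i) → D.natDegree = 0) :
    ∃ g : R, g ≠ 0 ∧ C g ∈ Ideal.span (Set.range Q) := by
  let K := FractionRing R
  have hinj : Function.Injective (algebraMap R[X] K[X]) :=
    Polynomial.map_injective _ (IsFractionRing.injective R K)
  set I := Ideal.span (Set.range Q)
  have hJ : I.map (algebraMap R[X] K[X]) = ⊤ := by
    obtain ⟨d, hd⟩ := (IsPrincipalIdealRing.principal (I.map (algebraMap R[X] K[X]))).principal
    have hdvd : ∀ i, d ∣ (Q i).map (algebraMap R K) := fun i => by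
      have := Ideal.mem_map_of_mem (algebraMap R[X] K[X]) (Ideal.subset_span ⟨i, rfl⟩ : Q i ∈ I)
      rw [hd] at this
      exact Ideal.mem_span_singleton.mp this
    have hd0 : d ≠ 0 := by
      rintro rfl
      exact hQ (hinj (by simpa using zero_dvd_iff.mp (hdvd i₀)))
    rw [hd, Ideal.submodule_span_eq, Ideal.span_singleton_eq_top]
    exact isUnit_of_forall_dvd_map hd0 hdvd hcop
  -- `K[X]` localizes `R[X]` at the nonzero constants, so `1 ∈ I.map _` yields a constant in `I`
  have : IsLocalization ((nonZeroDivisors R).map C) K[X] := Polynomial.isLocalization _ _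
  obtain ⟨⟨⟨x, hxI⟩, ⟨m, hm⟩⟩, h⟩ := (IsLocalization.mem_map_algebraMap_iff
    ((nonZeroDivisors R).map C) K[X]).mp (hJ ▸ Submodule.mem_top : (1 : K[X]) ∈ _)
  obtain ⟨g, hg, rfl⟩ := Submonoid.mem_map.mp hm
  refine ⟨g, nonZeroDivisors.ne_zero hg, ?_⟩
  have hx : C g = x := hinj (by rw [← h, one_mul])
  rwa [hx]

end Polynomial

namespace MvPolynomial

section CommRing

variable {R σ τ : Type*} [CommRing R]

theorem aeval_update_eq_rename_map_optionEquivRight [DecidableEq σ] (v : σ) (c : R)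
    (D : MvPolynomial σ R) :
    aeval (Function.update X v (C c)) D =
      rename Subtype.val (map (Polynomial.evalRingHom c)
        (optionEquivRight R {x // x ≠ v} (rename (Equiv.optionSubtypeNe v).symm D))) := by
  induction D using MvPolynomial.induction_on with
  | C a => simp
  | add p q hp hq => simp only [map_add, hp, hq]
  | mul_X p x hp =>
    simp only [map_mul, hp]
    congr 1
    by_cases hx : x = v
    · subst hx; simp
    · simp [hx, Equiv.optionSubtypeNe_symm_of_ne hx]

theorem bind₁_sumElim_eq_map_eval (x : σ → R) (g : MvPolynomial (σ ⊕ τ) R) :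
    bind₁ (Sum.elim (C ∘ x) X) g =
      map (eval x) (sumAlgEquiv R τ σ (rename (Equiv.sumComm σ τ) g)) := by
  induction g using MvPolynomial.induction_on with
  | C a => simp
  | add p q hp hq => simp only [map_add, hp, hq]
  | mul_X p i hp => cases i <;> simp [hp]

theorem exists_ne_zero_forall_eval_ne_zero_bind₁_ne_zero {g : MvPolynomial (σ ⊕ τ) R}
    (hg : g ≠ 0) : ∃ G : MvPolynomial σ R, G ≠ 0 ∧
      ∀ x : σ → R, eval x G ≠ 0 → bind₁ (Sum.elim (C ∘ x) X) g ≠ 0 := by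
  set e := (renameEquiv R (Equiv.sumComm σ τ)).trans (sumAlgEquiv R τ σ)
  obtain ⟨m, hm⟩ := ne_zero_iff.mp ((map_ne_zero_iff e e.injective).mpr hg)
  refine ⟨coeff m (e g), hm, fun x hx h => hx ?_⟩
  rw [bind₁_sumElim_eq_map_eval] at h
  simpa [coeff_map, e] using congrArg (coeff m) h

theorem notMem_vars_bind₁_sumElim (x : σ → R) {g : MvPolynomial (σ ⊕ τ) R} {k : τ}
    (hk : Sum.inr k ∉ g.vars) : k ∉ (bind₁ (Sum.elim (C ∘ x) X) g).vars := by
  classical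
  intro h
  obtain ⟨i, hi, hki⟩ := mem_vars_bind₁ _ g h
  cases i with
  | inl j => simp at hki
  | inr l =>
    rw [Sum.elim_inr, vars_def, Multiset.mem_toFinset] at hki
    obtain rfl := Multiset.mem_singleton.mp (Multiset.mem_of_le (degrees_X' l) hki)
    exact hk hi

end CommRing

section IsDomain

variable {R σ : Type*} [CommRing R] [IsDomain R]

theorem vars_subset_of_dvd {D p : MvPolynomial σ R} (h : D ∣ p) (hp : p ≠ 0) :
    D.vars ⊆ p.vars := by
  classical
  obtain ⟨E, rfl⟩ := h
  intro i hi
  rw [mem_vars_iff_degreeOf_ne_zero] at hi ⊢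
  rw [degreeOf_mul_eq (left_ne_zero_of_mul hp) (right_ne_zero_of_mul hp)]
  omega

theorem totalDegree_eq_zero_of_dvd_of_dvd_of_disjoint {D p q : MvPolynomial σ R}
    (hDp : D ∣ p) (hDq : D ∣ q) (hp : p ≠ 0) (hq : q ≠ 0) (hpq : Disjoint p.vars q.vars) :
    D.totalDegree = 0 := by
  have hD : D.vars = ∅ := Finset.subset_empty.mp
    (hpq (vars_subset_of_dvd hDp hp) (vars_subset_of_dvd hDq hq))
  rw [vars_eq_empty_iff_eq_C] at hD
  rw [hD, totalDegree_C]

theorem totalDegree_eq_zero_of_forall_dvd_rename {τ ι : Type*} {f : σ → τ}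
    (hf : Function.Injective f) (q : ι → MvPolynomial σ R) {i₀ : ι} (hq : q i₀ ≠ 0)
    (hcop : ∀ D : MvPolynomial σ R, (∀ i, D ∣ q i) → D.totalDegree = 0)
    {E : MvPolynomial τ R} (hE : ∀ i, E ∣ rename f (q i)) : E.totalDegree = 0 := by
  classical
  have hq' : rename f (q i₀) ≠ 0 := by simpa using (rename_injective f hf).ne hq
  have hvars : (E.vars : Set τ) ⊆ Set.range f := fun x hx => by
    obtain ⟨y, -, rfl⟩ := Finset.mem_image.mp <|
      vars_rename f (q i₀) (vars_subset_of_dvd (hE i₀) hq' hx)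
    exact ⟨y, rfl⟩
  obtain ⟨E', rfl⟩ := exists_rename_eq_of_vars_subset_range E f hf hvars
  have : E'.totalDegree = 0 := hcop E' fun i => by
    simpa only [killCompl_rename_app] using map_dvd (killCompl hf) (hE i)
  exact Nat.eq_zero_of_le_zero (this ▸ totalDegree_rename_le f E')

theorem exists_eq_aeval_X_of_totalDegree_aeval_update_eq_zero [DecidableEq σ] (v : σ)
    {D : MvPolynomial σ R} {s : Set R} (hs : s.Infinite)
    (h : ∀ c ∈ s, (aeval (Function.update X v (C c)) D).totalDegree = 0) :
    ∃ p : Polynomial R, D = Polynomial.aeval (X v) p := by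
  set e := (renameEquiv R (Equiv.optionSubtypeNe v).symm).trans
    (optionEquivRight R {x // x ≠ v})
  have hcoeff : ∀ m, m ≠ 0 → coeff m (e D) = 0 := by
    intro m hm
    -- as a polynomial in `v`, this coefficient of `D` vanishes on `s`
    refine Polynomial.eq_zero_of_infinite_isRoot _ (hs.mono fun c hc => ?_)
    have hc := totalDegree_eq_zero_iff_eq_C.mp (h c hc)
    rw [aeval_update_eq_rename_map_optionEquivRight] at hc
    have := congrArg (fun P => coeff m (killCompl Subtype.val_injective P)) hc
    simp only [killCompl_rename_app, killCompl_C, coeff_map, coeff_C, if_neg (Ne.symm hm)]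
      at this
    exact this
  refine ⟨coeff 0 (e D), e.injective ?_⟩
  have hX : e (X v) = C Polynomial.X := by simp [e]
  rw [← Polynomial.aeval_algHom_apply, hX, ← algebraMap_eq, Polynomial.aeval_algebraMap_apply,
    Polynomial.aeval_X_left_apply, algebraMap_eq]
  ext m : 1
  rw [coeff_C]
  split_ifs with hm
  · rw [hm]
  · exact hcoeff m (Ne.symm hm)

end IsDomain

theorem exists_mem_span_ne_zero_notMem_vars {K σ ι : Type*} [Field K] (Q : ι → MvPolynomial σ K)
    {i₀ : ι} (hQ : Q i₀ ≠ 0) (hcop : ∀ D : MvPolynomial σ K, (∀ i, D ∣ Q i) → D.totalDegree = 0)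
    (v : σ) :
    ∃ g ∈ Ideal.span (Set.range Q), g ≠ 0 ∧ v ∉ g.vars := by
  classical
  set e := (renameEquiv K (Equiv.optionSubtypeNe v).symm).trans (optionEquivLeft K {x // x ≠ v})
  obtain ⟨g, hg, hgI⟩ := Polynomial.exists_C_mem_span_of_forall_dvd_natDegree_eq_zero
    (fun i => e (Q i)) (by simpa using hQ) fun D hD => by
      obtain ⟨c, hc⟩ : ∃ c, e.symm D = C c := ⟨_, totalDegree_eq_zero_iff_eq_C.mp
        (hcop _ fun i => by simpa using map_dvd e.symm (hD i))⟩
      rw [← e.apply_symm_apply D, hc]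
      simp [e]
  refine ⟨e.symm (Polynomial.C g), ?_, by simpa using hg, ?_⟩
  · have := Ideal.mem_map_of_mem e.symm hgI
    simpa only [Ideal.map_span, ← Set.range_comp, Function.comp_def, AlgEquiv.symm_apply_apply]
      using this
  · rw [mem_vars_iff_degreeOf_ne_zero, degreeOf_eq_natDegree, not_not]
    simp [e]

end MvPolynomial

section Line

variable (r : ℕ) (n : Fin r → ℤ)

noncomputable def lineChart (c : ℚ) :
    MvPolynomial (Fin r ⊕ Fin 2) ℚ →ₐ[ℚ] MvPolynomial (Fin r ⊕ Fin 2) ℚ :=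
  aeval (Sum.elim (fun j => C c * X (Sum.inl j) + C (n j : ℚ) * X (Sum.inr 0)) (X ∘ Sum.inr))

/-- At `t = c`, the relation `x = u n + c a` is inverted by `a = (x - u n) / c`. -/
noncomputable def lineChartInv (c : ℚ) :
    MvPolynomial (Fin r ⊕ Fin 2) ℚ →ₐ[ℚ] MvPolynomial (Fin r ⊕ Fin 2) ℚ :=
  aeval (Sum.elim (fun j => C c⁻¹ * (X (Sum.inl j) - C (n j : ℚ) * X (Sum.inr 0)))
    ![X (Sum.inr 0), C c])

noncomputable def basePointEval :
    MvPolynomial (Fin r ⊕ Fin 2) ℚ →ₐ[ℚ] MvPolynomial (Fin r ⊕ Fin 2) ℚ :=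
  aeval (Sum.elim 0 ![1, X (Sum.inr 1)])

variable {r n}

theorem lineChartInv_subLine {c : ℚ} (hc : c ≠ 0) (p : MvPolynomial (Fin r) ℤ) :
    lineChartInv r n c (subLine r n p) = rename Sum.inl (p.map (Int.castRingHom ℚ)) := by
  induction p using MvPolynomial.induction_on with
  | C a => simp [subLine]
  | add p q hp hq => simp only [map_add, hp, hq]
  | mul_X p j hp =>
    rw [map_mul, map_mul, hp, map_mul, map_mul]
    congr 1
    simp only [subLine, lineChartInv, coe_eval₂Hom, eval₂_X, map_add, map_mul, aeval_X,
      Sum.elim_inl, Sum.elim_inr, map_intCast, Matrix.cons_val_zero, Matrix.cons_val_one,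
      map_X, rename_X]
    rw [mul_right_comm, ← C_mul, inv_mul_cancel₀ hc, C_1, one_mul]
    ring

theorem lineChart_comp_lineChartInv {c : ℚ} (hc : c ≠ 0) :
    (lineChart r n c).comp (lineChartInv r n c) = aeval (Function.update X (Sum.inr 1) (C c)) := by
  refine algHom_ext fun x => ?_
  rcases x with j | k
  · simp [lineChart, lineChartInv, ← mul_assoc, ← C_mul, inv_mul_cancel₀ hc]
  · fin_cases k <;> simp [lineChart, lineChartInv]

theorem basePointEval_subLine (p : MvPolynomial (Fin r) ℤ) :
    basePointEval r (subLine r n p) = C (eval n p : ℚ) := by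
  induction p using MvPolynomial.induction_on with
  | C a => simp [subLine]
  | add p q hp hq => simp only [map_add, hp, hq, Int.cast_add]
  | mul_X p j hp =>
    rw [map_mul, map_mul, hp, map_mul, Int.cast_mul, map_mul]
    congr 1
    simp [subLine, basePointEval]

theorem bind₁_subLine (a : Fin r → ℤ) (p : MvPolynomial (Fin r) ℤ) :
    bind₁ (Sum.elim (C ∘ fun j => (a j : ℚ)) X) (subLine r n p) = subLineAt r n a p := by
  induction p using MvPolynomial.induction_on with
  | C a => simp [subLine, subLineAt]
  | add p q hp hq => simp only [map_add, hp, hq]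
  | mul_X p j hp =>
    rw [map_mul, map_mul, hp, map_mul]
    congr 1
    simp [subLine, subLineAt]

theorem subLine_ne_zero_of_eval_ne_zero {p : MvPolynomial (Fin r) ℤ} (hp : eval n p ≠ 0) :
    subLine r n p ≠ 0 := fun h => hp <| by
  have := congrArg (basePointEval r) h
  rwa [basePointEval_subLine, map_zero, C_eq_zero, Int.cast_eq_zero] at this

theorem totalDegree_eq_zero_of_forall_dvd_subLine {ι : Type*} {P : ι → MvPolynomial (Fin r) ℤ}
    (hcop : ∀ D : MvPolynomial (Fin r) ℚ,
      (∀ i, D ∣ (P i).map (Int.castRingHom ℚ)) → D.totalDegree = 0)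
    {i₀ : ι} (hn : eval n (P i₀) ≠ 0) {D : MvPolynomial (Fin r ⊕ Fin 2) ℚ}
    (hD : ∀ i, D ∣ subLine r n (P i)) : D.totalDegree = 0 := by
  have hP : (P i₀).map (Int.castRingHom ℚ) ≠ 0 := by
    intro h
    apply hn
    rw [map_injective _ Int.cast_injective (h.trans (map_zero _).symm), map_zero]
  have hspec : ∀ c ∈ ({0}ᶜ : Set ℚ),
      (aeval (Function.update X (Sum.inr 1) (C c)) D).totalDegree = 0 := by
    intro c hc
    have h := totalDegree_eq_zero_of_forall_dvd_rename Sum.inl_injective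
      (fun i => (P i).map (Int.castRingHom ℚ)) hP hcop fun i => by
      rw [← lineChartInv_subLine hc]
      exact map_dvd _ (hD i)
    rw [← lineChart_comp_lineChartInv hc, AlgHom.comp_apply, totalDegree_eq_zero_iff_eq_C.mp h,
      algHom_C, algebraMap_eq, totalDegree_C]
  obtain ⟨p, rfl⟩ := exists_eq_aeval_X_of_totalDegree_aeval_update_eq_zero (Sum.inr 1)
    (Set.finite_singleton 0).infinite_compl hspec
  have hX : basePointEval r (X (Sum.inr 1)) = X (Sum.inr 1) := by simp [basePointEval]
  have hdvd := map_dvd (basePointEval r) (hD i₀)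
  rw [basePointEval_subLine, ← Polynomial.aeval_algHom_apply, hX] at hdvd
  obtain ⟨b, -, hb⟩ := (dvd_C_iff_exists (Int.cast_ne_zero.mpr hn)).mp hdvd
  rw [hb, totalDegree_C]

end Line

theorem stmt17_general (s r : ℕ)
    (P : Fin s → MvPolynomial (Fin r) ℤ)
    (hcop : ∀ D : MvPolynomial (Fin r) ℚ,
      (∀ i, D ∣ (P i).map (Int.castRingHom ℚ)) → D.totalDegree = 0)
    (n : Fin r → ℤ) (hn : ∃ i, eval n (P i) ≠ 0) :
    (∀ D : MvPolynomial (Fin r ⊕ Fin 2) ℚ,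
      (∀ i, D ∣ subLine r n (P i)) → D.totalDegree = 0) ∧
    ∃ G : MvPolynomial (Fin r) ℚ, G ≠ 0 ∧
      ∀ a : Fin r → ℤ, eval (fun j => (a j : ℚ)) G ≠ 0 →
        ∀ D : MvPolynomial (Fin 2) ℚ,
          (∀ i, D ∣ subLineAt r n a (P i)) → D.totalDegree = 0 := by
  obtain ⟨i₀, hi₀⟩ := hn
  set Q := fun i => subLine r n (P i)
  have hcopQ := fun D => totalDegree_eq_zero_of_forall_dvd_subLine (D := D) hcop hi₀
  refine ⟨hcopQ, ?_⟩
  have hQ : Q i₀ ≠ 0 := subLine_ne_zero_of_eval_ne_zero hi₀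
  obtain ⟨gu, hguI, hgu, hgu_t⟩ := exists_mem_span_ne_zero_notMem_vars Q hQ hcopQ (Sum.inr 1)
  obtain ⟨gt, hgtI, hgt, hgt_u⟩ := exists_mem_span_ne_zero_notMem_vars Q hQ hcopQ (Sum.inr 0)
  obtain ⟨Gu, hGu, hGu_spec⟩ := exists_ne_zero_forall_eval_ne_zero_bind₁_ne_zero hgu
  obtain ⟨Gt, hGt, hGt_spec⟩ := exists_ne_zero_forall_eval_ne_zero_bind₁_ne_zero hgt
  refine ⟨Gu * Gt, mul_ne_zero hGu hGt, fun a ha D hD => ?_⟩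
  rw [map_mul] at ha
  set spec := bind₁ (Sum.elim (C ∘ fun j => (a j : ℚ)) X)
  have hDspec : Ideal.span (Set.range Q) ≤ (Ideal.span {D}).comap spec :=
    Ideal.span_le.mpr <| Set.range_subset_iff.mpr fun i =>
      Ideal.mem_span_singleton.mpr (by simpa [Q, spec, bind₁_subLine] using hD i)
  refine totalDegree_eq_zero_of_dvd_of_dvd_of_disjoint
    (Ideal.mem_span_singleton.mp (hDspec hguI)) (Ideal.mem_span_singleton.mp (hDspec hgtI))
    (hGu_spec _ (left_ne_zero_of_mul ha)) (hGt_spec _ (right_ne_zero_of_mul ha))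
    (Finset.disjoint_left.mpr fun k hku hkt => ?_)
  fin_cases k
  · exact notMem_vars_bind₁_sumElim _ hgt_u hkt
  · exact notMem_vars_bind₁_sumElim _ hgu_t hku

/-- If `P_1,…,P_s ∈ ℤ[x_1,…,x_r]` (`r ≥ 2`) are nonzero coprime polynomials not
all vanishing at `n`, then the `P_i(u·n + t·a)` are coprime in `ℚ[a,u,t]`;
consequently, off a proper Zariski-closed subset of directions `a*`, the
polynomials `P_i(u·n + t·a*)` are coprime in `ℚ[u,t]`. -/
theorem stmt17 (s r : ℕ) (hs : 2 ≤ s) (hr : 2 ≤ r)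
    (P : Fin s → MvPolynomial (Fin r) ℤ)
    (hP : ∀ i, P i ≠ 0)
    (hcop : ∀ D : MvPolynomial (Fin r) ℚ,
      (∀ i, D ∣ (P i).map (Int.castRingHom ℚ)) → D.totalDegree = 0)
    (n : Fin r → ℤ) (hn : ∃ i, eval n (P i) ≠ 0) :
    (∀ D : MvPolynomial (Fin r ⊕ Fin 2) ℚ,
      (∀ i, D ∣ subLine r n (P i)) → D.totalDegree = 0) ∧
    ∃ G : MvPolynomial (Fin r) ℚ, G ≠ 0 ∧
      ∀ a : Fin r → ℤ, eval (fun j => (a j : ℚ)) G ≠ 0 →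
        ∀ D : MvPolynomial (Fin 2) ℚ,
          (∀ i, D ∣ subLineAt r n a (P i)) → D.totalDegree = 0 :=
  stmt17_general s r P hcop n hn
end
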